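/- arXiv:1604.07381 — 9 statements merged into one kernel-verified Lean document; each statement's English description precedes it below -/
import Mathlib

section
/- For every n ≥ 1, every convex continuous function f : [0,1] → ℝ, and all x, y ∈ [0,1], the inequality ∑_{i=0}^{n} ∑_{j=0}^{n} (b_{n,i}(x)·b_{n,j}(x) + b_{n,i}(y)·b_{n,j}(y) − 2·b_{n,i}(x)·b_{n,j}(y)) · f((i+j)/(2n)) ≥ 0 holds. -/
/-!
Put `a i = b_{n,i}(x) - b_{n,i}(y)` and `c p = f (p / 2n)`. By symmetry of `c (i + j)` the
sum is the Hankel form `∑ a i * a j * c (i + j)`, and since `∑ a i = 0`, summation by parts in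
both indices turns it into `∑ A k * A l * Δ²c (k + l)` over the partial sums
`A k = ∑_{i ≤ k} a i`. Convexity gives `Δ²c ≥ 0`. Moreover `A k = P_k(x) - P_k(y)` with
`P_k = ∑_{i ≤ k} b_{n,i}` decreasing on `[0, 1]`, because `P_k' = -n b_{n-1,k} ≤ 0`; so all
`A k` have the sign of `y - x`.
-/

open Finset

/-- Bernstein fundamental polynomial `b_{n,i}(x)`. -/
def bern (n i : ℕ) (x : ℝ) : ℝ := (n.choose i : ℝ) * x ^ i * (1 - x) ^ (n - i)

section SummationByParts

variable {R : Type*} [CommRing R]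

theorem sum_sum_polarization (u v c : ℕ → R) (N : ℕ) :
    ∑ i ∈ range N, ∑ j ∈ range N, (u i * u j + v i * v j - 2 * u i * v j) * c (i + j)
      = ∑ i ∈ range N, ∑ j ∈ range N, (u i - v i) * (u j - v j) * c (i + j) := by
  have hswap : ∑ i ∈ range N, ∑ j ∈ range N, v i * u j * c (i + j)
      = ∑ i ∈ range N, ∑ j ∈ range N, u i * v j * c (i + j) := by
    rw [sum_comm]
    exact sum_congr rfl fun i _ => sum_congr rfl fun j _ => by rw [add_comm]; ring
  have hterm : ∀ i j, (u i * u j + v i * v j - 2 * u i * v j) * c (i + j)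
      = (u i - v i) * (u j - v j) * c (i + j)
        + (v i * u j * c (i + j) - u i * v j * c (i + j)) :=
    fun i j => by ring
  simp_rw [hterm, sum_add_distrib, sum_sub_distrib, hswap, sub_self, add_zero]

variable {a : ℕ → R} {n : ℕ}


theorem sum_mul_eq_neg_sum_partialSum_mul_sub (ha : ∑ i ∈ range (n + 1), a i = 0)
    (g : ℕ → R) :
    ∑ i ∈ range (n + 1), a i * g i
      = -∑ k ∈ range n, (∑ i ∈ range (k + 1), a i) * (g (k + 1) - g k) := by
  simpa [ha, mul_comm] using sum_range_by_parts g a (n + 1)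

theorem sum_sum_hankel_eq_of_sum_eq_zero (ha : ∑ i ∈ range (n + 1), a i = 0)
    (c : ℕ → R) :
    ∑ i ∈ range (n + 1), ∑ j ∈ range (n + 1), a i * a j * c (i + j)
      = ∑ k ∈ range n, ∑ l ∈ range n,
          (∑ i ∈ range (k + 1), a i) * (∑ j ∈ range (l + 1), a j)
            * (c (k + l + 2) - 2 * c (k + l + 1) + c (k + l)) := by
  set A : ℕ → R := fun k => ∑ i ∈ range (k + 1), a i
  have hparts : ∀ g : ℕ → R, ∑ i ∈ range (n + 1), a i * g i
      = -∑ k ∈ range n, A k * (g (k + 1) - g k) :=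
    sum_mul_eq_neg_sum_partialSum_mul_sub ha
  calc ∑ i ∈ range (n + 1), ∑ j ∈ range (n + 1), a i * a j * c (i + j)
      = ∑ j ∈ range (n + 1), a j * ∑ i ∈ range (n + 1), a i * c (i + j) := by
        rw [sum_comm]
        simp_rw [mul_sum]
        exact sum_congr rfl fun _ _ => sum_congr rfl fun _ _ => by ring
    _ = ∑ j ∈ range (n + 1), a j * -∑ k ∈ range n, A k * (c (k + 1 + j) - c (k + j)) := by
        simp_rw [hparts]
    _ = -∑ k ∈ range n, A k * ∑ j ∈ range (n + 1), a j * (c (k + 1 + j) - c (k + j)) := by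
        simp_rw [mul_neg, sum_neg_distrib, mul_sum]
        rw [sum_comm]
        exact congrArg _ (sum_congr rfl fun _ _ => sum_congr rfl fun _ _ => by ring)
    _ = ∑ k ∈ range n, ∑ l ∈ range n,
          A k * A l * (c (k + l + 2) - 2 * c (k + l + 1) + c (k + l)) := by
        simp_rw [hparts, mul_neg, sum_neg_distrib, neg_neg, mul_sum]
        refine sum_congr rfl fun k _ => sum_congr rfl fun l _ => ?_
        rw [show k + 1 + (l + 1) = k + l + 2 by omega, show k + (l + 1) = k + l + 1 by omega,
          show k + 1 + l = k + l + 1 by omega]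
        ring

end SummationByParts

section Bernstein

open Polynomial

theorem bern_eq_eval_bernsteinPolynomial (n i : ℕ) (x : ℝ) :
    bern n i x = (bernsteinPolynomial ℝ n i).eval x := by
  simp [bern, bernsteinPolynomial]

theorem sum_range_bern (n : ℕ) (x : ℝ) : ∑ i ∈ range (n + 1), bern n i x = 1 := by
  simp_rw [bern_eq_eval_bernsteinPolynomial, ← eval_finsetSum, bernsteinPolynomial.sum, eval_one]

theorem bern_nonneg (n i : ℕ) {x : ℝ} (hx : x ∈ Set.Icc (0 : ℝ) 1) : 0 ≤ bern n i x := by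
  obtain ⟨hx0, hx1⟩ := hx
  have : 0 ≤ 1 - x := sub_nonneg.2 hx1
  unfold bern
  positivity

theorem bernsteinPolynomial.derivative_sum_range {R : Type*} [CommRing R] (n k : ℕ) :
    derivative (∑ i ∈ range (k + 1), bernsteinPolynomial R (n + 1) i)
      = -((n : R[X]) + 1) * bernsteinPolynomial R n k := by
  induction k with
  | zero => simp [bernsteinPolynomial.derivative_zero]
  | succ k ih =>
    rw [sum_range_succ, derivative_add, ih, bernsteinPolynomial.derivative_succ_aux]
    ring

theorem antitoneOn_sum_range_bern (n k : ℕ) :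
    AntitoneOn (fun t => ∑ i ∈ range (k + 1), bern (n + 1) i t) (Set.Icc 0 1) := by
  simp_rw [bern_eq_eval_bernsteinPolynomial, ← eval_finsetSum]
  refine antitoneOn_of_deriv_nonpos (convex_Icc 0 1) (Polynomial.continuousOn _)
    (Polynomial.differentiableOn _) fun t ht => ?_
  rw [interior_Icc] at ht
  rw [Polynomial.deriv, bernsteinPolynomial.derivative_sum_range, eval_mul,
    ← bern_eq_eval_bernsteinPolynomial]
  simp only [eval_neg, eval_add, eval_natCast, eval_one, neg_mul, neg_nonpos]
  exact mul_nonneg (by positivity) (bern_nonneg n k (Set.Ioo_subset_Icc_self ht))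

end Bernstein

theorem ConvexOn.second_difference_nonneg {s : Set ℝ} {f : ℝ → ℝ} (hf : ConvexOn ℝ s f)
    {p h : ℝ} (hp : p ∈ s) (hq : p + 2 * h ∈ s) :
    0 ≤ f (p + 2 * h) - 2 * f (p + h) + f p := by
  have hmid := hf.2 hp hq (by norm_num : (0 : ℝ) ≤ 1 / 2) (by norm_num : (0 : ℝ) ≤ 1 / 2)
    (by norm_num)
  simp only [smul_eq_mul] at hmid
  rw [show 1 / 2 * p + 1 / 2 * (p + 2 * h) = p + h by ring] at hmid
  linarith

theorem ConvexOn.second_difference_natCast_div_nonneg {f : ℝ → ℝ}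
    (hf : ConvexOn ℝ (Set.Icc 0 1) f) {p N : ℕ} (hp : p + 2 ≤ N) :
    0 ≤ f ((p + 2 : ℕ) / N) - 2 * f ((p + 1 : ℕ) / N) + f (p / N) := by
  have hN : (0 : ℝ) < N := by exact_mod_cast (show 0 < N by omega)
  have hmem : ∀ q : ℕ, q ≤ N → (q : ℝ) / N ∈ Set.Icc (0 : ℝ) 1 :=
    fun q hq => ⟨by positivity, (div_le_one hN).2 (by exact_mod_cast hq)⟩
  have hstep : ∀ r : ℕ, ((p + r : ℕ) : ℝ) / N = p / N + r * (1 / N) := fun r => by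
    push_cast; ring
  have h := hf.second_difference_nonneg (h := 1 / N) (hmem p (by omega))
    (by convert hmem (p + 2) hp using 1; rw [hstep]; push_cast; ring)
  rw [hstep 2, hstep 1]
  simpa using h

theorem rasa_inequality_general (n : ℕ) (f : ℝ → ℝ)
    (hconv : ConvexOn ℝ (Set.Icc 0 1) f)
    (x y : ℝ) (hx : x ∈ Set.Icc (0:ℝ) 1) (hy : y ∈ Set.Icc (0:ℝ) 1) :
    0 ≤ ∑ i ∈ range (n + 1), ∑ j ∈ range (n + 1),
      (bern n i x * bern n j x + bern n i y * bern n j y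
        - 2 * bern n i x * bern n j y) * f ((i + j : ℝ) / (2 * n)) := by
  rcases n with _ | m
  · norm_num [bern]
  set c : ℕ → ℝ := fun p => f (p / (2 * (m + 1) : ℕ))
  have hc : ∀ i j : ℕ, f ((i + j : ℝ) / (2 * (m + 1 : ℕ))) = c (i + j) := fun i j => by
    show f _ = f _
    push_cast
    rfl
  have hsum : ∑ i ∈ range (m + 1 + 1), (bern (m + 1) i x - bern (m + 1) i y) = 0 := by
    rw [sum_sub_distrib, sum_range_bern, sum_range_bern, sub_self]
  simp_rw [hc, sum_sum_polarization, sum_sum_hankel_eq_of_sum_eq_zero hsum, sum_sub_distrib]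
  refine sum_nonneg fun k hk => sum_nonneg fun l hl => mul_nonneg ?_ ?_
  · exact ((antitoneOn_sum_range_bern m k).monovaryOn
      (antitoneOn_sum_range_bern m l)).sub_mul_sub_nonneg hy hx
  · rw [mem_range] at hk hl
    exact hconv.second_difference_natCast_div_nonneg (p := k + l) (N := 2 * (m + 1)) (by omega)

/-- Raşa's inequality. -/
theorem rasa_inequality (n : ℕ) (hn : 1 ≤ n) (f : ℝ → ℝ)
    (hconv : ConvexOn ℝ (Set.Icc 0 1) f) (hcont : ContinuousOn f (Set.Icc 0 1))
    (x y : ℝ) (hx : x ∈ Set.Icc (0:ℝ) 1) (hy : y ∈ Set.Icc (0:ℝ) 1) :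
    0 ≤ ∑ i ∈ range (n + 1), ∑ j ∈ range (n + 1),
      (bern n i x * bern n j x + bern n i y * bern n j y
        - 2 * bern n i x * bern n j y) * f ((i + j : ℝ) / (2 * n)) :=
  rasa_inequality_general n f hconv x y hx hy
end

section
/- Let x, y ∈ (0,1), n ≥ 1, and set z = (x+y)/2. Then for every convex function f : ℝ → ℝ, ∑_{k=0}^{2n} C(2n,k)·z^k·(1−z)^{2n−k}·f(k) ≤ (1/2)·∑_{k=0}^{2n} C(2n,k)·(x^k·(1−x)^{2n−k} + y^k·(1−y)^{2n−k})·f(k). In other words, B(2n,(x+y)/2) ≤_cx (1/2)(B(2n,x) + B(2n,y)) in the stochastic convex order. -/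
/-!
Let `B_m g (p) = ∑ₖ C(m,k) pᵏ (1-p)^(m-k) g(k)` be the Bernstein polynomial of a sequence `g`.
Its derivative is `(B_{m+1} g)' = (m+1) · B_m (Δg)` with `Δg(k) = g(k+1) - g(k)`, and `B_m`
preserves nonnegativity on `[0,1]`. Hence `B_m` maps nondecreasing sequences to nondecreasing
functions on `[0,1]`, and sequences with nondecreasing `Δg` (such as `k ↦ f k` for convex `f`) to
convex functions on `[0,1]`. The theorem is midpoint convexity of `p ↦ B_{2n} f (p)`.
-/

open Finset Polynomial fwdDiff

noncomputable def bernsteinSum {R : Type*} [CommRing R] (m : ℕ) (g : ℕ → R) : R[X] :=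
  ∑ k ∈ range (m + 1), g k • bernsteinPolynomial R m k

section CommRing

variable {R : Type*} [CommRing R]

theorem eval_bernsteinSum (m : ℕ) (g : ℕ → R) (p : R) :
    (bernsteinSum m g).eval p =
      ∑ k ∈ range (m + 1), (m.choose k : R) * p ^ k * (1 - p) ^ (m - k) * g k := by
  simp only [bernsteinSum, eval_finsetSum, eval_smul, bernsteinPolynomial, eval_mul, eval_pow,
    eval_natCast, eval_X, eval_sub, eval_one, smul_eq_mul]
  exact sum_congr rfl fun k _ => by ring

theorem derivative_bernsteinSum_succ (m : ℕ) (g : ℕ → R) :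
    derivative (bernsteinSum (m + 1) g) = (m + 1 : R[X]) * bernsteinSum m (Δ_[1] g) := by
  have hshift : ∑ k ∈ range (m + 1), g k • bernsteinPolynomial R m k =
      ∑ k ∈ range (m + 1), g (k + 1) • bernsteinPolynomial R m (k + 1) +
        g 0 • bernsteinPolynomial R m 0 := by
    rw [← sum_range_succ' (fun k => g k • bernsteinPolynomial R m k), sum_range_succ _ (m + 1),
      bernsteinPolynomial.eq_zero_of_lt R (Nat.lt_succ_self m), smul_zero, add_zero]
  rw [bernsteinSum, derivative_sum, sum_range_succ']
  simp only [derivative_smul, bernsteinPolynomial.derivative_succ,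
    bernsteinPolynomial.derivative_zero, Nat.add_sub_cancel, Nat.cast_succ]
  rw [bernsteinSum]
  simp only [fwdDiff, sub_smul, sum_sub_distrib]
  rw [hshift]
  simp only [← mul_smul_comm, smul_sub, smul_neg, neg_mul, sum_sub_distrib, ← mul_sum]
  ring

end CommRing

theorem eval_bernsteinSum_nonneg {g : ℕ → ℝ} (hg : ∀ k, 0 ≤ g k) (m : ℕ) {p : ℝ}
    (hp : p ∈ Set.Icc 0 1) : 0 ≤ (bernsteinSum m g).eval p := by
  rw [eval_bernsteinSum]
  have hp₀ : 0 ≤ p := hp.1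
  have hp₁ : 0 ≤ 1 - p := sub_nonneg.2 hp.2
  exact sum_nonneg fun k _ => by have := hg k; positivity

theorem deriv_eval_bernsteinSum_succ (m : ℕ) (g : ℕ → ℝ) :
    deriv (fun p => (bernsteinSum (m + 1) g).eval p) =
      fun p => (m + 1) * (bernsteinSum m (Δ_[1] g)).eval p := by
  ext p
  rw [Polynomial.deriv, derivative_bernsteinSum_succ]
  simp

theorem monotoneOn_eval_bernsteinSum {g : ℕ → ℝ} (hg : Monotone g) (m : ℕ) :
    MonotoneOn (fun p => (bernsteinSum m g).eval p) (Set.Icc 0 1) := by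
  cases m with
  | zero => simp [bernsteinSum, bernsteinPolynomial, monotoneOn_const]
  | succ m =>
    refine monotoneOn_of_deriv_nonneg (convex_Icc 0 1) (Polynomial.continuousOn _)
      (Polynomial.differentiableOn _) fun p hp => ?_
    rw [deriv_eval_bernsteinSum_succ]
    have hΔ : ∀ k, 0 ≤ Δ_[1] g k := fun k => sub_nonneg.2 (hg k.le_succ)
    exact mul_nonneg (by positivity)
      (eval_bernsteinSum_nonneg hΔ m (interior_subset (s := Set.Icc (0:ℝ) 1) hp))

theorem convexOn_eval_bernsteinSum {g : ℕ → ℝ} (hg : Monotone (Δ_[1] g)) (m : ℕ) :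
    ConvexOn ℝ (Set.Icc 0 1) (fun p => (bernsteinSum m g).eval p) := by
  cases m with
  | zero =>
    simpa [bernsteinSum, bernsteinPolynomial] using convexOn_const (g 0) (convex_Icc (0:ℝ) 1)
  | succ m =>
    refine MonotoneOn.convexOn_of_deriv (convex_Icc 0 1) (Polynomial.continuousOn _)
      (Polynomial.differentiableOn _) ?_
    rw [deriv_eval_bernsteinSum_succ]
    exact (monotone_mul_left_of_nonneg (by positivity)).comp_monotoneOn
      ((monotoneOn_eval_bernsteinSum hg m).mono interior_subset)

theorem ConvexOn.monotone_fwdDiff_natCast {f : ℝ → ℝ} (hf : ConvexOn ℝ (Set.Ici 0) f) :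
    Monotone (Δ_[1] fun k : ℕ => f k) := by
  refine monotone_nat_of_le_succ fun k => ?_
  have h := hf.slope_mono_adjacent (x := k) (y := k + 1) (z := k + 2) (by simp)
    (by simp; positivity) (by linarith) (by linarith)
  simp only [fwdDiff]
  push_cast
  ring_nf at h ⊢
  simpa using h

theorem binomial_midpoint_cx_general (n : ℕ) (x y : ℝ)
    (hx : x ∈ Set.Ioo (0:ℝ) 1) (hy : y ∈ Set.Ioo (0:ℝ) 1)
    (f : ℝ → ℝ) (hf : ConvexOn ℝ Set.univ f) :
    ∑ k ∈ range (2 * n + 1),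
        ((2 * n).choose k : ℝ) * ((x + y) / 2) ^ k * (1 - (x + y) / 2) ^ (2 * n - k) * f k
      ≤ (1 / 2) * ∑ k ∈ range (2 * n + 1),
        ((2 * n).choose k : ℝ) *
          (x ^ k * (1 - x) ^ (2 * n - k) + y ^ k * (1 - y) ^ (2 * n - k)) * f k := by
  have hconvex := convexOn_eval_bernsteinSum
    (hf.subset (Set.subset_univ _) (convex_Ici 0)).monotone_fwdDiff_natCast (2 * n)
  have hmid := hconvex.2 (Set.Ioo_subset_Icc_self hx) (Set.Ioo_subset_Icc_self hy)
    (by norm_num : (0:ℝ) ≤ 1 / 2) (by norm_num : (0:ℝ) ≤ 1 / 2) (add_halves 1)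
  rw [show (1 / 2 : ℝ) • x + (1 / 2 : ℝ) • y = (x + y) / 2 by simp only [smul_eq_mul]; ring]
    at hmid
  simp only [eval_bernsteinSum, smul_eq_mul, ← mul_add] at hmid
  refine hmid.trans_eq ?_
  rw [← sum_add_distrib]
  exact congrArg _ (sum_congr rfl fun k _ => by ring)

/-- Proposition 2: `B(2n,(x+y)/2) ≤_cx (1/2)(B(2n,x)+B(2n,y))`. -/
theorem binomial_midpoint_cx (n : ℕ) (hn : 1 ≤ n) (x y : ℝ)
    (hx : x ∈ Set.Ioo (0:ℝ) 1) (hy : y ∈ Set.Ioo (0:ℝ) 1)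
    (f : ℝ → ℝ) (hf : ConvexOn ℝ Set.univ f) :
    ∑ k ∈ range (2 * n + 1),
        ((2 * n).choose k : ℝ) * ((x + y) / 2) ^ k * (1 - (x + y) / 2) ^ (2 * n - k) * f k
      ≤ (1 / 2) * ∑ k ∈ range (2 * n + 1),
        ((2 * n).choose k : ℝ) *
          (x ^ k * (1 - x) ^ (2 * n - k) + y ^ k * (1 - y) ^ (2 * n - k)) * f k :=
  binomial_midpoint_cx_general n x y hx hy f hf
end

section
/- Let x, y ∈ (0,1) and n ≥ 1. If X ∼ B(n,x) and Y ∼ B(n,y) are independent, then for every convex f : ℝ → ℝ, E f(X+Y) ≤ E f(S*), where S* ∼ B(2n, (x+y)/2). Equivalently, ∑_{k=0}^{2n} (∑_{i+j=k} C(n,i)x^i(1−x)^{n−i}·C(n,j)y^j(1−y)^{n−j})·f(k) ≤ ∑_{k=0}^{2n} C(2n,k)·((x+y)/2)^k·(1−(x+y)/2)^{2n−k}·f(k). -/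
/-!
Adding one trial to each of `X ∼ B(n,x)` and `Y ∼ B(n,y)` gives
`E F(X_{n+1} + Y_{n+1}) = E G(X_n + Y_n)`, where `G k = E F(k + B_x + B_y)` for independent
Bernoulli variables `B_x`, `B_y`. Replacing both success probabilities by `m = (x+y)/2` increases
`G k` by `((x-y)/2)^2 (F k - 2 F (k+1) + F (k+2)) ≥ 0` and keeps `G` convex on `ℕ`, so induction on
`n` gives `E F(X + Y) ≤ E F(X' + Y')` for independent `X', Y' ∼ B(n,m)`, and `X' + Y' ∼ B(2n,m)`.
-/

open Finset

noncomputable def binomWeight (n k : ℕ) (p : ℝ) : ℝ :=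
  n.choose k * p ^ k * (1 - p) ^ (n - k)

noncomputable def binomExpect (n : ℕ) (p : ℝ) (F : ℕ → ℝ) : ℝ :=
  ∑ k ∈ range (n + 1), binomWeight n k p * F k

noncomputable def binomPairExpect (n : ℕ) (x y : ℝ) (F : ℕ → ℝ) : ℝ :=
  binomExpect n x fun i => binomExpect n y fun j => F (i + j)

noncomputable def bernoulliPairExpect (x y : ℝ) (F : ℕ → ℝ) (k : ℕ) : ℝ :=
  (1 - x) * (1 - y) * F k + ((1 - x) * y + x * (1 - y)) * F (k + 1) + x * y * F (k + 2)

def DiscreteConvex (F : ℕ → ℝ) : Prop :=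
  ∀ k, 2 * F (k + 1) ≤ F k + F (k + 2)

section Binomial

variable {n k : ℕ} {p : ℝ}

lemma binomWeight_nonneg (hp₀ : 0 ≤ p) (hp₁ : p ≤ 1) : 0 ≤ binomWeight n k p := by
  have : 0 ≤ 1 - p := by linarith
  unfold binomWeight
  positivity

lemma binomWeight_succ_zero : binomWeight (n + 1) 0 p = (1 - p) * binomWeight n 0 p := by
  simp [binomWeight, pow_succ, mul_comm]

lemma binomWeight_succ_succ :
    binomWeight (n + 1) (k + 1) p = (1 - p) * binomWeight n (k + 1) p + p * binomWeight n k p := by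
  unfold binomWeight
  rw [Nat.choose_succ_succ, Nat.add_sub_add_right]
  rcases lt_or_ge k n with hk | hk
  · rw [show n - k = n - (k + 1) + 1 by omega]
    push_cast
    ring
  · rw [Nat.choose_eq_zero_of_lt (by omega : n < k + 1), Nat.sub_eq_zero_of_le hk]
    simp only [add_zero, Nat.cast_zero, pow_zero]
    ring

lemma binomWeight_self_succ : binomWeight n (n + 1) p = 0 := by
  simp [binomWeight]

lemma binomExpect_succ (F : ℕ → ℝ) :
    binomExpect (n + 1) p F = binomExpect n p fun k => (1 - p) * F k + p * F (k + 1) := by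
  have extend : ∑ k ∈ range (n + 1), binomWeight n k p * ((1 - p) * F k)
      = ∑ k ∈ range (n + 2), binomWeight n k p * ((1 - p) * F k) := by
    rw [sum_range_succ _ (n + 1), binomWeight_self_succ, zero_mul, add_zero]
  simp only [binomExpect, mul_add, sum_add_distrib]
  rw [extend, sum_range_succ', sum_range_succ' _ (n + 1)]
  simp only [binomWeight_succ_succ, binomWeight_succ_zero, add_mul, sum_add_distrib, mul_assoc,
    mul_left_comm (1 - p), mul_left_comm p]
  ring

lemma binomExpect_mul_add_mul (a b : ℝ) (F G : ℕ → ℝ) :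
    binomExpect n p (fun k => a * F k + b * G k)
      = a * binomExpect n p F + b * binomExpect n p G := by
  simp only [binomExpect, mul_sum, ← sum_add_distrib]
  exact sum_congr rfl fun _ _ => by ring

lemma binomExpect_mono (hp₀ : 0 ≤ p) (hp₁ : p ≤ 1) {F G : ℕ → ℝ} (hFG : ∀ k, F k ≤ G k) :
    binomExpect n p F ≤ binomExpect n p G :=
  sum_le_sum fun k _ => mul_le_mul_of_nonneg_left (hFG k) (binomWeight_nonneg hp₀ hp₁)

end Binomial

section Pair

variable {n : ℕ} {x y : ℝ}

lemma binomPairExpect_succ (F : ℕ → ℝ) :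
    binomPairExpect (n + 1) x y F = binomPairExpect n x y (bernoulliPairExpect x y F) := by
  simp only [binomPairExpect, binomExpect_succ, ← binomExpect_mul_add_mul]
  congr 1
  ext i
  congr 1
  ext j
  rw [bernoulliPairExpect, Nat.add_right_comm i 1 j, show i + (j + 1) = i + j + 1 by omega,
    show i + 1 + (j + 1) = i + j + 2 by omega]
  ring

lemma binomPairExpect_mono (hx₀ : 0 ≤ x) (hx₁ : x ≤ 1) (hy₀ : 0 ≤ y) (hy₁ : y ≤ 1)
    {F G : ℕ → ℝ} (hFG : ∀ k, F k ≤ G k) :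
    binomPairExpect n x y F ≤ binomPairExpect n x y G :=
  binomExpect_mono hx₀ hx₁ fun i => binomExpect_mono hy₀ hy₁ fun j => hFG (i + j)

lemma binomPairExpect_self (p : ℝ) (F : ℕ → ℝ) :
    binomPairExpect n p p F = binomExpect (2 * n) p F := by
  induction n generalizing F with
  | zero => simp [binomPairExpect, binomExpect, binomWeight]
  | succ n ih =>
    rw [binomPairExpect_succ, ih, show 2 * (n + 1) = 2 * n + 1 + 1 by omega, binomExpect_succ,
      binomExpect_succ]
    congr 1
    ext k
    rw [bernoulliPairExpect, show k + 1 + 1 = k + 2 from rfl]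
    ring

end Pair

lemma discreteConvex_bernoulliPairExpect {F : ℕ → ℝ} (hF : DiscreteConvex F) {x y : ℝ}
    (hx₀ : 0 ≤ x) (hx₁ : x ≤ 1) (hy₀ : 0 ≤ y) (hy₁ : y ≤ 1) :
    DiscreteConvex (bernoulliPairExpect x y F) := by
  intro k
  have hx : 0 ≤ 1 - x := by linarith
  have hy : 0 ≤ 1 - y := by linarith
  simp only [bernoulliPairExpect]
  linarith [mul_le_mul_of_nonneg_left (hF k) (mul_nonneg hx hy),
    mul_le_mul_of_nonneg_left (hF (k + 1)) (add_nonneg (mul_nonneg hx hy₀) (mul_nonneg hx₀ hy)),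
    mul_le_mul_of_nonneg_left (hF (k + 2)) (mul_nonneg hx₀ hy₀)]

lemma bernoulliPairExpect_le_midpoint {F : ℕ → ℝ} (hF : DiscreteConvex F)
    (x y : ℝ) (k : ℕ) :
    bernoulliPairExpect x y F k ≤ bernoulliPairExpect ((x + y) / 2) ((x + y) / 2) F k := by
  have gap : bernoulliPairExpect ((x + y) / 2) ((x + y) / 2) F k - bernoulliPairExpect x y F k
      = ((x - y) / 2) ^ 2 * (F k + F (k + 2) - 2 * F (k + 1)) := by
    simp only [bernoulliPairExpect]
    ring
  linarith [mul_nonneg (sq_nonneg ((x - y) / 2)) (sub_nonneg.2 (hF k))]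

lemma binomPairExpect_le_midpoint {F : ℕ → ℝ} (hF : DiscreteConvex F) {n : ℕ}
    {x y : ℝ} (hx₀ : 0 ≤ x) (hx₁ : x ≤ 1) (hy₀ : 0 ≤ y) (hy₁ : y ≤ 1) :
    binomPairExpect n x y F ≤ binomPairExpect n ((x + y) / 2) ((x + y) / 2) F := by
  have hm₀ : 0 ≤ (x + y) / 2 := by positivity
  have hm₁ : (x + y) / 2 ≤ 1 := by linarith
  set m := (x + y) / 2
  induction n generalizing F with
  | zero => simp [binomPairExpect, binomExpect, binomWeight]
  | succ n ih =>
    calc binomPairExpect (n + 1) x y F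
        = binomPairExpect n x y (bernoulliPairExpect x y F) := binomPairExpect_succ F
      _ ≤ binomPairExpect n x y (bernoulliPairExpect m m F) :=
        binomPairExpect_mono hx₀ hx₁ hy₀ hy₁ (bernoulliPairExpect_le_midpoint hF x y)
      _ ≤ binomPairExpect n m m (bernoulliPairExpect m m F) :=
        ih (discreteConvex_bernoulliPairExpect hF hm₀ hm₁ hm₀ hm₁)
      _ = binomPairExpect (n + 1) m m F := (binomPairExpect_succ F).symm

lemma ConvexOn.discreteConvex_comp_natCast {f : ℝ → ℝ} (hf : ConvexOn ℝ Set.univ f) :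
    DiscreteConvex fun k => f k := by
  intro k
  have h := hf.2 (Set.mem_univ (k : ℝ)) (Set.mem_univ ((k : ℝ) + 2)) (by norm_num : (0 : ℝ) ≤ 1 / 2)
    (by norm_num : (0 : ℝ) ≤ 1 / 2) (by norm_num)
  simp only [smul_eq_mul] at h
  push_cast
  rw [show 1 / 2 * (k : ℝ) + 1 / 2 * (k + 2) = k + 1 by ring] at h
  linarith

theorem binomial_sum_cx_concentration_general (n : ℕ) (x y : ℝ)
    (hx : x ∈ Set.Ioo (0:ℝ) 1) (hy : y ∈ Set.Ioo (0:ℝ) 1)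
    (f : ℝ → ℝ) (hf : ConvexOn ℝ Set.univ f) :
    ∑ i ∈ range (n + 1), ∑ j ∈ range (n + 1),
        ((n.choose i : ℝ) * x ^ i * (1 - x) ^ (n - i)) *
          ((n.choose j : ℝ) * y ^ j * (1 - y) ^ (n - j)) * f ((i : ℝ) + j)
      ≤ ∑ k ∈ range (2 * n + 1),
        ((2 * n).choose k : ℝ) * ((x + y) / 2) ^ k * (1 - (x + y) / 2) ^ (2 * n - k) * f k := by
  calc _ = binomPairExpect n x y fun k => f k := by
        simp only [binomPairExpect, binomExpect, binomWeight, mul_sum, mul_assoc, Nat.cast_add]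
    _ ≤ binomPairExpect n ((x + y) / 2) ((x + y) / 2) fun k => f k :=
      binomPairExpect_le_midpoint hf.discreteConvex_comp_natCast hx.1.le hx.2.le hy.1.le hy.2.le
    _ = _ := binomPairExpect_self _ _

/-- Proposition 1: if `X ∼ B(n,x)` and `Y ∼ B(n,y)` are independent, then
`X + Y ≤_cx B(2n,(x+y)/2)`, written via the distributions. -/
theorem binomial_sum_cx_concentration (n : ℕ) (hn : 1 ≤ n) (x y : ℝ)
    (hx : x ∈ Set.Ioo (0:ℝ) 1) (hy : y ∈ Set.Ioo (0:ℝ) 1)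
    (f : ℝ → ℝ) (hf : ConvexOn ℝ Set.univ f) :
    ∑ i ∈ range (n + 1), ∑ j ∈ range (n + 1),
        ((n.choose i : ℝ) * x ^ i * (1 - x) ^ (n - i)) *
          ((n.choose j : ℝ) * y ^ j * (1 - y) ^ (n - j)) * f ((i : ℝ) + j)
      ≤ ∑ k ∈ range (2 * n + 1),
        ((2 * n).choose k : ℝ) * ((x + y) / 2) ^ k * (1 - (x + y) / 2) ^ (2 * n - k) * f k :=
  binomial_sum_cx_concentration_general n x y hx hy f hf
end

section
/- Let b_1, …, b_n be independent Bernoulli random variables with parameters p_1, …, p_n ∈ (0,1), let S_n = b_1 + ⋯ + b_n, let p̄ = (p_1 + ⋯ + p_n)/n, and let S*_n ∼ B(n, p̄). Then for every convex function Φ : ℝ → ℝ, E Φ(S_n) ≤ E Φ(S*_n). -/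
/-
Write `E_s g = E[g(S)]` for `S` a sum of independent Bernoulli variables with parameters
`q ∈ s`. Conditioning on one summand gives `E_{q::s} g = (1 - q) E_s g + q E_s g(· + 1)`, so for
fixed `x + y`, `E_{x::y::s} Φ` is `x y · E_s[Φ(· + 2) - 2 Φ(· + 1) + Φ]` plus terms depending on
`x + y` only; for convex `Φ` it increases with `x y`. Replacing a parameter `x ≥ p̄` and another
`y ≤ p̄` by `p̄` and `x + y - p̄` therefore does not decrease `E Φ(S_n)`, keeps the mean, and
fixes one parameter at `p̄`; induction on the number of parameters ends at `B(n, p̄)`.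
-/

open Finset MeasureTheory ProbabilityTheory

/-- The binomial distribution `B(n,p)` as a measure on `ℝ`. -/
noncomputable def binMeasure (n : ℕ) (p : ℝ) : Measure ℝ :=
  ∑ k ∈ range (n + 1),
    ENNReal.ofReal ((n.choose k : ℝ) * p ^ k * (1 - p) ^ (n - k)) • Measure.dirac (k : ℝ)

lemma Multiset.exists_mem_le_of_sum_le {α : Type*} [AddCommMonoid α] [LinearOrder α]
    [IsOrderedCancelAddMonoid α] {s : Multiset α} (hs : s ≠ 0) {m : α}
    (h : s.sum ≤ Multiset.card s • m) : ∃ x ∈ s, x ≤ m := by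
  by_contra! hlt
  have := Multiset.sum_lt_sum_of_nonempty hs (f := fun _ => m) (g := id) hlt
  simp only [Multiset.map_const', Multiset.sum_replicate, Multiset.map_id] at this
  exact this.not_ge h

lemma Multiset.exists_mem_ge_of_le_sum {α : Type*} [AddCommMonoid α] [LinearOrder α]
    [IsOrderedCancelAddMonoid α] {s : Multiset α} (hs : s ≠ 0) {m : α}
    (h : Multiset.card s • m ≤ s.sum) : ∃ x ∈ s, m ≤ x :=
  Multiset.exists_mem_le_of_sum_le (α := αᵒᵈ) hs h

lemma Multiset.exists_eq_cons_cons_of_sum_eq {α : Type*} [AddCommMonoid α] [LinearOrder α]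
    [IsOrderedCancelAddMonoid α] {s : Multiset α} (hs : 2 ≤ Multiset.card s) {m : α}
    (hsum : s.sum = Multiset.card s • m) : ∃ x y r, s = x ::ₘ y ::ₘ r ∧ y ≤ m ∧ m ≤ x := by
  obtain ⟨x, hxs, hmx⟩ := Multiset.exists_mem_ge_of_le_sum (Multiset.card_pos.mp (by omega))
    hsum.ge
  have hcard : Multiset.card (s.erase x) + 1 = Multiset.card s :=
    Multiset.card_erase_add_one hxs
  have hle : (s.erase x).sum ≤ Multiset.card (s.erase x) • m := by
    have h : x + (s.erase x).sum = m + Multiset.card (s.erase x) • m := by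
      rw [Multiset.sum_erase hxs, hsum, ← hcard, succ_nsmul, add_comm]
    by_contra! hlt
    exact absurd h (add_lt_add_of_le_of_lt hmx hlt).ne'
  obtain ⟨y, hyt, hym⟩ := Multiset.exists_mem_le_of_sum_le
    (Multiset.card_pos.mp (by omega)) hle
  exact ⟨x, y, (s.erase x).erase y,
    by rw [Multiset.cons_erase hyt, Multiset.cons_erase hxs], hym, hmx⟩

lemma ConvexOn.two_mul_apply_add_one_le {f : ℝ → ℝ} (hf : ConvexOn ℝ Set.univ f) (x : ℝ) :
    2 * f (x + 1) ≤ f x + f (x + 1 + 1) := by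
  have h := hf.2 (Set.mem_univ x) (Set.mem_univ (x + 1 + 1)) (by norm_num : (0 : ℝ) ≤ 1 / 2)
    (by norm_num : (0 : ℝ) ≤ 1 / 2) (by norm_num)
  simp only [smul_eq_mul] at h
  rw [show 1 / 2 * x + 1 / 2 * (x + 1 + 1) = x + 1 by ring] at h
  linarith

def bernoulliStep (q : ℝ) (F : (ℝ → ℝ) → ℝ) (g : ℝ → ℝ) : ℝ :=
  (1 - q) * F g + q * F (fun x => g (x + 1))

instance : LeftCommutative bernoulliStep :=
  ⟨fun _ _ _ => funext fun _ => by simp only [bernoulliStep]; ring⟩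

/-- `bernoulliSumExpect s g` is `E[g(S)]` for `S` a sum of independent Bernoulli variables whose
parameters are the elements of `s`. -/
def bernoulliSumExpect (s : Multiset ℝ) : (ℝ → ℝ) → ℝ :=
  s.foldr bernoulliStep (fun g => g 0)

@[simp]
lemma bernoulliSumExpect_zero (g : ℝ → ℝ) : bernoulliSumExpect 0 g = g 0 := rfl

lemma bernoulliSumExpect_cons (q : ℝ) (s : Multiset ℝ) (g : ℝ → ℝ) :
    bernoulliSumExpect (q ::ₘ s) g
      = (1 - q) * bernoulliSumExpect s g + q * bernoulliSumExpect s (fun x => g (x + 1)) := by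
  simp [bernoulliSumExpect, bernoulliStep]

lemma two_mul_bernoulliSumExpect_le {s : Multiset ℝ} (hs : ∀ q ∈ s, q ∈ Set.Icc (0 : ℝ) 1)
    {g : ℝ → ℝ} (hg : ∀ x, 2 * g (x + 1) ≤ g x + g (x + 1 + 1)) :
    2 * bernoulliSumExpect s (fun x => g (x + 1))
      ≤ bernoulliSumExpect s g + bernoulliSumExpect s (fun x => g (x + 1 + 1)) := by
  induction s using Multiset.induction_on generalizing g with
  | empty => simpa using hg 0
  | cons q s ih =>
    obtain ⟨hq0, hq1⟩ := hs q (Multiset.mem_cons_self q s)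
    have hs' : ∀ r ∈ s, r ∈ Set.Icc (0 : ℝ) 1 := fun r hr => hs r (Multiset.mem_cons_of_mem hr)
    have h0 := ih hs' hg
    have h1 := ih hs' (g := fun x => g (x + 1)) (fun x => hg (x + 1))
    simp only [bernoulliSumExpect_cons]
    nlinarith

lemma bernoulliSumExpect_cons_cons_le {s : Multiset ℝ} (hs : ∀ q ∈ s, q ∈ Set.Icc (0 : ℝ) 1)
    {g : ℝ → ℝ} (hg : ∀ x, 2 * g (x + 1) ≤ g x + g (x + 1 + 1)) {x y x' y' : ℝ}
    (hsum : x + y = x' + y') (hprod : x * y ≤ x' * y') :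
    bernoulliSumExpect (x ::ₘ y ::ₘ s) g ≤ bernoulliSumExpect (x' ::ₘ y' ::ₘ s) g := by
  have hconv := two_mul_bernoulliSumExpect_le hs hg
  simp only [bernoulliSumExpect_cons]
  have hy' : y' = x + y - x' := by linarith
  subst hy'
  nlinarith [mul_nonneg (sub_nonneg.2 hprod) (sub_nonneg.2 hconv)]

lemma exists_bernoulliSumExpect_le_cons {s : Multiset ℝ} (hs : ∀ q ∈ s, q ∈ Set.Icc (0 : ℝ) 1)
    {N : ℕ} (hcard : Multiset.card s = N + 1) {m : ℝ} (hsum : s.sum = (N + 1) * m) :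
    ∃ t : Multiset ℝ, Multiset.card t = N ∧ t.sum = N * m ∧
      (∀ q ∈ m ::ₘ t, q ∈ Set.Icc (0 : ℝ) 1) ∧
      ∀ g : ℝ → ℝ, (∀ x, 2 * g (x + 1) ≤ g x + g (x + 1 + 1)) →
        bernoulliSumExpect s g ≤ bernoulliSumExpect (m ::ₘ t) g := by
  rcases Nat.eq_zero_or_pos N with rfl | hN
  · obtain ⟨x, rfl⟩ := Multiset.card_eq_one.mp hcard
    obtain rfl : x = m := by simpa using hsum
    exact ⟨0, rfl, by simp, hs, fun g _ => le_rfl⟩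
  obtain ⟨x, y, r, rfl, hym, hmx⟩ := Multiset.exists_eq_cons_cons_of_sum_eq (s := s) (m := m)
    (by omega) (by rw [hcard, hsum, nsmul_eq_mul]; push_cast; ring)
  simp only [Multiset.card_cons, Multiset.sum_cons, Multiset.mem_cons, forall_eq_or_imp,
    Set.mem_Icc] at hs hcard hsum
  obtain ⟨⟨hx0, hx1⟩, ⟨hy0, hy1⟩, hr⟩ := hs
  refine ⟨(x + y - m) ::ₘ r, by rw [Multiset.card_cons]; omega,
    by rw [Multiset.sum_cons]; linarith, ?_, fun g hg => ?_⟩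
  · simp only [Multiset.mem_cons, forall_eq_or_imp, Set.mem_Icc]
    exact ⟨⟨by linarith, by linarith⟩, ⟨by linarith, by linarith⟩, hr⟩
  · exact bernoulliSumExpect_cons_cons_le hr hg (by ring)
      (by nlinarith [mul_nonneg (sub_nonneg.2 hmx) (sub_nonneg.2 hym)])

lemma bernoulliSumExpect_le_replicate {N : ℕ} {s : Multiset ℝ} (hcard : Multiset.card s = N)
    (hs : ∀ q ∈ s, q ∈ Set.Icc (0 : ℝ) 1) {m : ℝ} (hsum : s.sum = N * m) {g : ℝ → ℝ}
    (hg : ∀ x, 2 * g (x + 1) ≤ g x + g (x + 1 + 1)) :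
    bernoulliSumExpect s g ≤ bernoulliSumExpect (Multiset.replicate N m) g := by
  induction N generalizing s g with
  | zero => rw [Multiset.card_eq_zero.mp hcard, Multiset.replicate_zero]
  | succ N ih =>
    obtain ⟨t, htcard, htsum, hmt, hst⟩ :=
      exists_bernoulliSumExpect_le_cons hs hcard (m := m) (by rw [hsum]; push_cast; ring)
    obtain ⟨hm0, hm1⟩ := hmt m (Multiset.mem_cons_self m t)
    have ht : ∀ q ∈ t, q ∈ Set.Icc (0 : ℝ) 1 := fun q hq => hmt q (Multiset.mem_cons_of_mem hq)
    calc bernoulliSumExpect s g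
        ≤ bernoulliSumExpect (m ::ₘ t) g := hst g hg
      _ ≤ bernoulliSumExpect (Multiset.replicate (N + 1) m) g := by
          rw [Multiset.replicate_succ, bernoulliSumExpect_cons m t, bernoulliSumExpect_cons m]
          exact add_le_add
            (mul_le_mul_of_nonneg_left (ih htcard ht htsum hg) (by linarith))
            (mul_le_mul_of_nonneg_left (ih htcard ht htsum fun x => hg (x + 1)) hm0)

/-- The `B(n, m)` probability of `k`; it vanishes for `k > n` although `n - k` truncates. -/
def binomialWeight (n : ℕ) (m : ℝ) (k : ℕ) : ℝ :=
  n.choose k * m ^ k * (1 - m) ^ (n - k)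

lemma binomialWeight_zero_right (n : ℕ) (m : ℝ) : binomialWeight n m 0 = (1 - m) ^ n := by
  simp [binomialWeight]

lemma binomialWeight_of_lt {n k : ℕ} (h : n < k) (m : ℝ) : binomialWeight n m k = 0 := by
  simp [binomialWeight, Nat.choose_eq_zero_of_lt h]

lemma binomialWeight_succ_succ (n k : ℕ) (m : ℝ) :
    binomialWeight (n + 1) m (k + 1)
      = (1 - m) * binomialWeight n m (k + 1) + m * binomialWeight n m k := by
  rcases lt_or_ge k n with h | h
  · have hnk : n - k = n - (k + 1) + 1 := by omega
    simp only [binomialWeight, Nat.choose_succ_succ', Nat.add_sub_add_right, hnk, pow_succ]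
    push_cast
    ring
  · rw [binomialWeight_of_lt (by omega : n < k + 1)]
    simp only [binomialWeight, Nat.choose_succ_succ', Nat.add_sub_add_right,
      Nat.choose_eq_zero_of_lt (by omega : n < k + 1)]
    push_cast
    ring

lemma bernoulliSumExpect_replicate (n : ℕ) (m : ℝ) (g : ℝ → ℝ) :
    bernoulliSumExpect (Multiset.replicate n m) g
      = ∑ k ∈ range (n + 1), binomialWeight n m k * g k := by
  induction n generalizing g with
  | zero => simp [binomialWeight]
  | succ n ih =>
    have hshift : ∑ k ∈ range (n + 1), binomialWeight n m k * g k
        = binomialWeight n m 0 * g 0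
          + ∑ k ∈ range (n + 1), binomialWeight n m (k + 1) * g ↑(k + 1) := by
      have h := sum_range_succ' (fun k => binomialWeight n m k * g k) (n + 1)
      rw [sum_range_succ, binomialWeight_of_lt (Nat.lt_succ_self n), zero_mul, add_zero] at h
      rw [h, add_comm, Nat.cast_zero]
    rw [Multiset.replicate_succ, bernoulliSumExpect_cons, ih, ih, sum_range_succ' _ (n + 1),
      hshift]
    simp only [binomialWeight_succ_succ, binomialWeight_zero_right, add_mul, sum_add_distrib,
      mul_assoc, ← mul_sum, Nat.cast_succ, Nat.cast_zero]
    ring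

lemma binMeasure_one_conv (q : ℝ) (ν : Measure ℝ) [SFinite ν] :
    binMeasure 1 q ∗ ν = ENNReal.ofReal (1 - q) • ν + ENNReal.ofReal q • ν.map (· + 1) := by
  have hshift : (fun y : ℝ => 1 + y) = (· + 1) := funext fun y => add_comm 1 y
  simp [binMeasure, sum_range_succ, Measure.add_conv, Measure.conv_smul_left,
    Measure.dirac_conv, hshift]

/-- `ν` is the law of a sum of independent Bernoulli variables with parameters `s`, as seen by
measurable test functions. -/
def IsBernoulliSumLaw (ν : Measure ℝ) (s : Multiset ℝ) : Prop :=
  ∀ g : ℝ → ℝ, Measurable g → Integrable g ν ∧ ∫ x, g x ∂ν = bernoulliSumExpect s g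

lemma isBernoulliSumLaw_dirac_zero : IsBernoulliSumLaw (Measure.dirac 0) 0 :=
  fun g _ => ⟨integrable_dirac (by simp), by simp⟩

lemma IsBernoulliSumLaw.binMeasure_one_conv {ν : Measure ℝ} [SFinite ν] {s : Multiset ℝ}
    (h : IsBernoulliSumLaw ν s) {q : ℝ} (hq : q ∈ Set.Icc (0 : ℝ) 1) :
    IsBernoulliSumLaw (binMeasure 1 q ∗ ν) (q ::ₘ s) := by
  intro g hg
  have hg1 : Measurable fun x => g (x + 1) := hg.comp (measurable_add_const 1)
  obtain ⟨hint, heq⟩ := h g hg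
  obtain ⟨hint1, heq1⟩ := h _ hg1
  have hint_map : Integrable g (ν.map (· + 1)) :=
    (integrable_map_measure hg.aestronglyMeasurable (measurable_add_const 1).aemeasurable).2 hint1
  rw [_root_.binMeasure_one_conv]
  refine ⟨(hint.smul_measure ENNReal.ofReal_ne_top).add_measure
    (hint_map.smul_measure ENNReal.ofReal_ne_top), ?_⟩
  rw [integral_add_measure (hint.smul_measure ENNReal.ofReal_ne_top)
      (hint_map.smul_measure ENNReal.ofReal_ne_top), integral_smul_measure, integral_smul_measure,
    integral_map (measurable_add_const 1).aemeasurable hg.aestronglyMeasurable,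
    ENNReal.toReal_ofReal (sub_nonneg.2 hq.2), ENNReal.toReal_ofReal hq.1, heq, heq1,
    bernoulliSumExpect_cons]
  rfl

lemma isBernoulliSumLaw_map_sum {Ω ι : Type*} [MeasurableSpace Ω] {μ : Measure Ω}
    [IsProbabilityMeasure μ] {b : ι → Ω → ℝ} (hmeas : ∀ i, Measurable (b i))
    (hindep : iIndepFun b μ) {p : ι → ℝ} (hp : ∀ i, p i ∈ Set.Icc (0 : ℝ) 1)
    (hdist : ∀ i, μ.map (b i) = binMeasure 1 (p i)) (s : Finset ι) :
    IsBernoulliSumLaw (μ.map (∑ i ∈ s, b i)) (s.val.map p) := by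
  classical
  induction s using Finset.induction_on with
  | empty =>
    simpa [Pi.zero_def, Measure.map_const] using isBernoulliSumLaw_dirac_zero
  | insert a s ha ih =>
    have hsum_meas : Measurable (∑ i ∈ s, b i) := by fun_prop
    have hindep_a := (hindep.indepFun_finsetSum_of_notMem hmeas ha).symm
    rw [Finset.sum_insert ha, hindep_a.map_add_eq_map_conv_map (hmeas a) hsum_meas, hdist,
      Finset.insert_val_of_notMem ha, Multiset.map_cons]
    exact ih.binMeasure_one_conv (hp a)

theorem hoeffding_convex_concentration_general {Ω : Type*} [MeasurableSpace Ω]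
    (μ : Measure Ω) [IsProbabilityMeasure μ] (n : ℕ)
    (p : Fin n → ℝ) (hp : ∀ i, p i ∈ Set.Ioo (0:ℝ) 1)
    (b : Fin n → Ω → ℝ) (hmeas : ∀ i, Measurable (b i))
    (hindep : iIndepFun b μ)
    (hdist : ∀ i, μ.map (b i) = binMeasure 1 (p i))
    (Φ : ℝ → ℝ) (hΦ : ConvexOn ℝ Set.univ Φ) :
    ∫ ω, Φ (∑ i, b i ω) ∂μ
      ≤ ∑ k ∈ range (n + 1),
          ((n.choose k : ℝ) * ((∑ i, p i) / n) ^ k * (1 - (∑ i, p i) / n) ^ (n - k)) * Φ k := by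
  have hp' : ∀ i, p i ∈ Set.Icc (0 : ℝ) 1 := fun i => Set.Ioo_subset_Icc_self (hp i)
  have hΦmeas : Measurable Φ := (continuousOn_univ.mp (hΦ.continuousOn isOpen_univ)).measurable
  have hsum : (univ.val.map p).sum = n * ((∑ i, p i) / n) := by
    rcases Nat.eq_zero_or_pos n with rfl | hn
    · simp
    · rw [mul_div_cancel₀ _ (by positivity)]; rfl
  have hlaw := isBernoulliSumLaw_map_sum hmeas hindep hp' hdist univ Φ hΦmeas
  have hchange : ∫ ω, Φ (∑ i, b i ω) ∂μ = ∫ x, Φ x ∂(μ.map (∑ i, b i)) := by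
    rw [integral_map (by fun_prop) hΦmeas.aestronglyMeasurable]
    simp only [Finset.sum_apply]
  rw [hchange, hlaw.2]
  calc bernoulliSumExpect (univ.val.map p) Φ
      ≤ bernoulliSumExpect (Multiset.replicate n ((∑ i, p i) / n)) Φ :=
        bernoulliSumExpect_le_replicate (by simp) (by simpa using hp') hsum
          hΦ.two_mul_apply_add_one_le
    _ = _ := bernoulliSumExpect_replicate n _ Φ

/-- Hoeffding's convex concentration inequality: a sum of independent Bernoulli
variables with parameters `p i` is dominated in the convex order by `B(n, p̄)`. -/
theorem hoeffding_convex_concentration {Ω : Type*} [MeasurableSpace Ω]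
    (μ : Measure Ω) [IsProbabilityMeasure μ] (n : ℕ) (hn : 1 ≤ n)
    (p : Fin n → ℝ) (hp : ∀ i, p i ∈ Set.Ioo (0:ℝ) 1)
    (b : Fin n → Ω → ℝ) (hmeas : ∀ i, Measurable (b i))
    (hindep : iIndepFun b μ)
    (hdist : ∀ i, μ.map (b i) = binMeasure 1 (p i))
    (Φ : ℝ → ℝ) (hΦ : ConvexOn ℝ Set.univ Φ) :
    ∫ ω, Φ (∑ i, b i ω) ∂μ
      ≤ ∑ k ∈ range (n + 1),
          ((n.choose k : ℝ) * ((∑ i, p i) / n) ^ k * (1 - (∑ i, p i) / n) ^ (n - k)) * Φ k :=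
  hoeffding_convex_concentration_general μ n p hp b hmeas hindep hdist Φ hΦ
end

section
/- Let X, Y be real-valued random variables with E X = E Y, whose distribution functions F_X, F_Y cross exactly once: there exists x₀ ∈ ℝ with F_X(x) ≤ F_Y(x) for x < x₀ and F_X(x) ≥ F_Y(x) for x > x₀. Then E f(X) ≤ E f(Y) for every convex function f : ℝ → ℝ for which both expectations exist. -/
open MeasureTheory Set

/-!
Subtracting the supporting line of `f` at `x₀` changes both sides by the same amount, because the
means agree. What remains is a continuous `g ≥ 0` with `g x₀ = 0`, decreasing left of `x₀` and
increasing right of it. For `t > 0` the superlevel set `{g > t}` is a left tail `(-∞, a)` with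
`a ≤ x₀` together with a right tail `(b, ∞)` with `b ≥ x₀`, and by the crossing condition `Y`
puts at least as much mass as `X` on each such tail. The layer-cake formula
`E g(Z) = ∫₀^∞ P(g(Z) > t) dt` then gives `E g(X) ≤ E g(Y)`.
-/

theorem ConvexOn.add_rightDeriv_mul_sub_le {S : Set ℝ} {f : ℝ → ℝ} (hf : ConvexOn ℝ S f)
    {x₀ x : ℝ} (hx₀ : x₀ ∈ interior S) (hx : x ∈ S) :
    f x₀ + derivWithin f (Ioi x₀) x₀ * (x - x₀) ≤ f x := by
  rcases lt_trichotomy x x₀ with hlt | rfl | hgt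
  · have := (hf.slope_le_leftDeriv_of_mem_interior hx hx₀ hlt).trans
      (hf.leftDeriv_le_rightDeriv_of_mem_interior hx₀)
    rw [slope_def_field, div_le_iff₀ (sub_pos.2 hlt)] at this
    linarith
  · simp
  · have := hf.rightDeriv_le_slope_of_mem_interior hx₀ hx hgt
    rw [slope_def_field, le_div_iff₀ (sub_pos.2 hgt)] at this
    linarith

theorem ConvexOn.antitoneOn_inter_Iic_of_isMinOn {S : Set ℝ} {g : ℝ → ℝ} {x₀ : ℝ}
    (hg : ConvexOn ℝ S g) (hx₀ : x₀ ∈ S) (hmin : IsMinOn g S x₀) :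
    AntitoneOn g (S ∩ Iic x₀) := by
  intro x hx y hy hxy
  have hseg : y ∈ segment ℝ x x₀ := by
    rw [segment_eq_Icc (hxy.trans hy.2)]; exact ⟨hxy, hy.2⟩
  exact (hg.le_on_segment hx.1 hx₀ hseg).trans (max_le le_rfl (hmin hx.1))

theorem ConvexOn.monotoneOn_inter_Ici_of_isMinOn {S : Set ℝ} {g : ℝ → ℝ} {x₀ : ℝ}
    (hg : ConvexOn ℝ S g) (hx₀ : x₀ ∈ S) (hmin : IsMinOn g S x₀) :
    MonotoneOn g (S ∩ Ici x₀) := by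
  intro x hx y hy hxy
  have hseg : x ∈ segment ℝ x₀ y := by
    rw [segment_eq_Icc (hx.2.trans hxy)]; exact ⟨hx.2, hxy⟩
  exact (hg.le_on_segment hx₀ hy.1 hseg).trans (max_le (hmin hy.1) le_rfl)

section OpenLowerSet

variable {α : Type*} [ConditionallyCompleteLinearOrder α] [TopologicalSpace α] [OrderTopology α]
  [DenselyOrdered α] {s : Set α}

theorem IsLowerSet.eq_Iio_csSup_of_isOpen [NoMaxOrder α] (hsl : IsLowerSet s) (hso : IsOpen s)
    (hne : s.Nonempty) (hbdd : BddAbove s) : s = Iio (sSup s) := by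
  ext x
  refine ⟨fun hx => ?_, fun hx => ?_⟩
  · obtain ⟨u, hxu, hu⟩ := exists_Ico_subset_of_mem_nhds (hso.mem_nhds hx) (exists_gt x)
    obtain ⟨y, hxy, hyu⟩ := exists_between hxu
    exact hxy.trans_le (le_csSup hbdd (hu ⟨hxy.le, hyu⟩))
  · obtain ⟨y, hy, hxy⟩ := exists_lt_of_lt_csSup hne hx
    exact hsl hxy.le hy

theorem IsUpperSet.eq_Ioi_csInf_of_isOpen [NoMinOrder α] (hsu : IsUpperSet s) (hso : IsOpen s)
    (hne : s.Nonempty) (hbdd : BddBelow s) : s = Ioi (sInf s) :=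
  IsLowerSet.eq_Iio_csSup_of_isOpen (α := αᵒᵈ) hsu.toDual hso hne hbdd

end OpenLowerSet

theorem le_of_antitoneOn_Iic_of_monotoneOn_Ici {α β : Type*} [LinearOrder α] [Preorder β]
    {g : α → β} {x₀ : α} (hanti : AntitoneOn g (Iic x₀)) (hmono : MonotoneOn g (Ici x₀))
    (x : α) : g x₀ ≤ g x :=
  (le_total x x₀).elim (fun hx => hanti hx self_mem_Iic hx) fun hx => hmono self_mem_Ici hx hx

namespace MeasureTheory

variable {ν₁ ν₂ : Measure ℝ}

theorem measure_Iio_le_of_forall_lt {a : ℝ} (h : ∀ x < a, ν₁ (Iio x) ≤ ν₂ (Iio x)) :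
    ν₁ (Iio a) ≤ ν₂ (Iio a) := by
  obtain ⟨u, hu_mono, hu_lt, hu_lim⟩ := exists_seq_strictMono_tendsto a
  have hunion : ⋃ n, Iio (u n) = Iio a := by
    refine Subset.antisymm (iUnion_subset fun n => Iio_subset_Iio (hu_lt n).le) fun x hx => ?_
    obtain ⟨n, hn⟩ := (hu_lim.eventually (lt_mem_nhds hx)).exists
    exact mem_iUnion.2 ⟨n, hn⟩
  have hmono : Monotone fun n => Iio (u n) := fun _ _ hmn => Iio_subset_Iio (hu_mono.monotone hmn)
  rw [← hunion, hmono.measure_iUnion, hmono.measure_iUnion]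
  exact iSup_mono fun n => h _ (hu_lt n)

theorem measure_Ioi_le_of_forall_gt {b : ℝ} (h : ∀ x > b, ν₁ (Ici x) ≤ ν₂ (Ici x)) :
    ν₁ (Ioi b) ≤ ν₂ (Ioi b) := by
  obtain ⟨u, hu_anti, hu_gt, hu_lim⟩ := exists_seq_strictAnti_tendsto b
  have hmono : Monotone fun n => Ici (u n) :=
    fun _ _ hmn => Ici_subset_Ici.2 (hu_anti.antitone hmn)
  rw [← iUnion_Ici_eq_Ioi_of_lt_of_tendsto hu_gt hu_lim, hmono.measure_iUnion,
    hmono.measure_iUnion]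
  exact iSup_mono fun n => h _ (hu_gt n)

theorem measure_Ici_le_of_measure_Iio_le [IsProbabilityMeasure ν₁] [IsProbabilityMeasure ν₂]
    {x : ℝ} (h : ν₂ (Iio x) ≤ ν₁ (Iio x)) : ν₁ (Ici x) ≤ ν₂ (Ici x) := by
  rw [← compl_Iio, prob_compl_eq_one_sub measurableSet_Iio,
    prob_compl_eq_one_sub measurableSet_Iio]
  exact tsub_le_tsub_left h 1

def TailsLE (x₀ : ℝ) (ν₁ ν₂ : Measure ℝ) : Prop :=
  (∀ a ≤ x₀, ν₁ (Iio a) ≤ ν₂ (Iio a)) ∧ ∀ b ≥ x₀, ν₁ (Ioi b) ≤ ν₂ (Ioi b)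

theorem tailsLE_of_crossing [IsProbabilityMeasure ν₁] [IsProbabilityMeasure ν₂] {x₀ : ℝ}
    (hcross₁ : ∀ x < x₀, ν₁ (Iio x) ≤ ν₂ (Iio x))
    (hcross₂ : ∀ x > x₀, ν₂ (Iio x) ≤ ν₁ (Iio x)) : TailsLE x₀ ν₁ ν₂ :=
  ⟨fun _ ha => measure_Iio_le_of_forall_lt fun x hx => hcross₁ x (hx.trans_le ha),
    fun _ hb => measure_Ioi_le_of_forall_gt fun x hx =>
      measure_Ici_le_of_measure_Iio_le (hcross₂ x (hb.trans_lt hx))⟩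

namespace TailsLE

variable {x₀ : ℝ}

theorem measure_le_of_isLowerSet (h : TailsLE x₀ ν₁ ν₂) {s : Set ℝ} (hso : IsOpen s)
    (hsl : IsLowerSet s) (hs : s ⊆ Iic x₀) : ν₁ s ≤ ν₂ s := by
  rcases s.eq_empty_or_nonempty with rfl | hne
  · simp
  rw [hsl.eq_Iio_csSup_of_isOpen hso hne ⟨x₀, hs⟩]
  exact h.1 _ (csSup_le hne hs)

theorem measure_le_of_isUpperSet (h : TailsLE x₀ ν₁ ν₂) {s : Set ℝ} (hso : IsOpen s)
    (hsu : IsUpperSet s) (hs : s ⊆ Ici x₀) : ν₁ s ≤ ν₂ s := by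
  rcases s.eq_empty_or_nonempty with rfl | hne
  · simp
  rw [hsu.eq_Ioi_csInf_of_isOpen hso hne ⟨x₀, hs⟩]
  exact h.2 _ (le_csInf hne hs)

variable {g : ℝ → ℝ}

theorem measure_setOf_lt_le (h : TailsLE x₀ ν₁ ν₂) (hgc : Continuous g)
    (hanti : AntitoneOn g (Iic x₀)) (hmono : MonotoneOn g (Ici x₀)) {t : ℝ} (ht : g x₀ ≤ t) :
    ν₁ {x | t < g x} ≤ ν₂ {x | t < g x} := by
  set S := {x | t < g x}
  have hSo : IsOpen S := isOpen_lt continuous_const hgc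
  have hsplit : S = (S ∩ Iio x₀) ∪ (S ∩ Ioi x₀) := by
    rw [← inter_union_distrib_left, Iio_union_Ioi, eq_comm, inter_eq_left,
      subset_compl_singleton_iff]
    exact ht.not_gt
  have hdisj : Disjoint (S ∩ Iio x₀) (S ∩ Ioi x₀) :=
    disjoint_left.2 fun x hl hr => lt_asymm (mem_Iio.1 hl.2) (mem_Ioi.1 hr.2)
  have hlower : IsLowerSet (S ∩ Iio x₀) := fun x y hyx ⟨(hx : t < g x), (hxx₀ : x < x₀)⟩ =>
    ⟨hx.trans_le (hanti (mem_Iic.2 (hyx.trans hxx₀.le)) (mem_Iic.2 hxx₀.le) hyx),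
      hyx.trans_lt hxx₀⟩
  have hupper : IsUpperSet (S ∩ Ioi x₀) := fun x y hxy ⟨(hx : t < g x), (hx₀x : x₀ < x)⟩ =>
    ⟨hx.trans_le (hmono (mem_Ici.2 hx₀x.le) (mem_Ici.2 (hx₀x.le.trans hxy)) hxy),
      hx₀x.trans_le hxy⟩
  rw [hsplit, measure_union hdisj (hSo.inter isOpen_Ioi).measurableSet,
    measure_union hdisj (hSo.inter isOpen_Ioi).measurableSet]
  exact add_le_add
    (h.measure_le_of_isLowerSet (hSo.inter isOpen_Iio) hlower
      (inter_subset_right.trans Iio_subset_Iic_self))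
    (h.measure_le_of_isUpperSet (hSo.inter isOpen_Ioi) hupper
      (inter_subset_right.trans Ioi_subset_Ici_self))

theorem lintegral_le (h : TailsLE x₀ ν₁ ν₂) (hgc : Continuous g)
    (hanti : AntitoneOn g (Iic x₀)) (hmono : MonotoneOn g (Ici x₀)) (hg₀ : g x₀ = 0) :
    ∫⁻ x, ENNReal.ofReal (g x) ∂ν₁ ≤ ∫⁻ x, ENNReal.ofReal (g x) ∂ν₂ := by
  have hnn : ∀ ν : Measure ℝ, 0 ≤ᵐ[ν] g := fun ν => ae_of_all _ fun x =>
    hg₀.symm.trans_le (le_of_antitoneOn_Iic_of_monotoneOn_Ici hanti hmono x)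
  rw [lintegral_eq_lintegral_meas_lt ν₁ (hnn ν₁) hgc.aemeasurable,
    lintegral_eq_lintegral_meas_lt ν₂ (hnn ν₂) hgc.aemeasurable]
  exact setLIntegral_mono' measurableSet_Ioi fun t ht =>
    h.measure_setOf_lt_le hgc hanti hmono (hg₀ ▸ le_of_lt ht)

theorem integral_le (h : TailsLE x₀ ν₁ ν₂) (hgc : Continuous g)
    (hanti : AntitoneOn g (Iic x₀)) (hmono : MonotoneOn g (Ici x₀)) (hg₀ : g x₀ = 0)
    (hg₂ : Integrable g ν₂) :
    ∫ x, g x ∂ν₁ ≤ ∫ x, g x ∂ν₂ := by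
  have hnn : ∀ ν : Measure ℝ, 0 ≤ᵐ[ν] g := fun ν => ae_of_all _ fun x =>
    hg₀.symm.trans_le (le_of_antitoneOn_Iic_of_monotoneOn_Ici hanti hmono x)
  rw [integral_eq_lintegral_of_nonneg_ae (hnn ν₁) hgc.aestronglyMeasurable,
    integral_eq_lintegral_of_nonneg_ae (hnn ν₂) hgc.aestronglyMeasurable]
  exact ENNReal.toReal_mono hg₂.lintegral_lt_top.ne (h.lintegral_le hgc hanti hmono hg₀)

end TailsLE

theorem integral_le_integral_of_crossing [IsProbabilityMeasure ν₁] [IsProbabilityMeasure ν₂]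
    (h₁ : Integrable id ν₁) (h₂ : Integrable id ν₂) (hmean : ∫ x, x ∂ν₁ = ∫ x, x ∂ν₂) {x₀ : ℝ}
    (hcross₁ : ∀ x < x₀, ν₁ (Iio x) ≤ ν₂ (Iio x))
    (hcross₂ : ∀ x > x₀, ν₂ (Iio x) ≤ ν₁ (Iio x))
    {f : ℝ → ℝ} (hf : ConvexOn ℝ univ f) (hf₁ : Integrable f ν₁) (hf₂ : Integrable f ν₂) :
    ∫ x, f x ∂ν₁ ≤ ∫ x, f x ∂ν₂ := by
  set c := derivWithin f (Ioi x₀) x₀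
  set ℓ : ℝ → ℝ := fun x => f x₀ + c * (x - x₀)
  have hℓ : ConcaveOn ℝ univ ℓ := ⟨convex_univ, fun x _ y _ a b _ _ hab => by
    simp only [ℓ, smul_eq_mul]; linear_combination (f x₀ - c * x₀) * hab⟩
  have hg : ConvexOn ℝ univ (f - ℓ) := hf.sub hℓ
  have hmin : IsMinOn (f - ℓ) univ x₀ := fun x _ => by
    simpa [ℓ] using hf.add_rightDeriv_mul_sub_le (by simp) (mem_univ x)
  have hℓint : ∀ ν : Measure ℝ, [IsProbabilityMeasure ν] → Integrable id ν →
      Integrable ℓ ν ∧ ∫ x, ℓ x ∂ν = f x₀ + c * (∫ x, x ∂ν - x₀) := by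
    intro ν _ hν
    have hlin : Integrable (fun x => c * (x - x₀)) ν :=
      (hν.sub (integrable_const x₀)).const_mul c
    refine ⟨(integrable_const _).add hlin, ?_⟩
    rw [integral_add (integrable_const _) hlin, integral_const_mul,
      integral_sub (f := fun x => x) hν (integrable_const _)]
    simp
  have key := (tailsLE_of_crossing hcross₁ hcross₂).integral_le
    ((continuousOn_univ.1 (hf.continuousOn isOpen_univ)).sub (by fun_prop))
    (by simpa using hg.antitoneOn_inter_Iic_of_isMinOn (mem_univ x₀) hmin)
    (by simpa using hg.monotoneOn_inter_Ici_of_isMinOn (mem_univ x₀) hmin)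
    (by simp [ℓ]) (hf₂.sub (hℓint ν₂ h₂).1)
  obtain ⟨hℓ₁, hℓ₁_eq⟩ := hℓint ν₁ h₁
  obtain ⟨hℓ₂, hℓ₂_eq⟩ := hℓint ν₂ h₂
  rw [Pi.sub_def, integral_sub hf₁ hℓ₁, integral_sub hf₂ hℓ₂, hℓ₁_eq, hℓ₂_eq, hmean] at key
  linarith

end MeasureTheory

/-- Ohlin's Lemma: equal means plus a single crossing of the distribution
functions `F_X(x) = P(X < x)` implies the convex stochastic order. -/
theorem ohlin_lemma {Ω : Type*} [MeasurableSpace Ω]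
    (μ : Measure Ω) [IsProbabilityMeasure μ] (X Y : Ω → ℝ)
    (hXm : Measurable X) (hYm : Measurable Y)
    (hXi : Integrable X μ) (hYi : Integrable Y μ)
    (hmean : ∫ ω, X ω ∂μ = ∫ ω, Y ω ∂μ)
    (x₀ : ℝ)
    (hcross₁ : ∀ x < x₀, μ {ω | X ω < x} ≤ μ {ω | Y ω < x})
    (hcross₂ : ∀ x > x₀, μ {ω | Y ω < x} ≤ μ {ω | X ω < x})
    (f : ℝ → ℝ) (hf : ConvexOn ℝ Set.univ f)
    (hfX : Integrable (fun ω => f (X ω)) μ) (hfY : Integrable (fun ω => f (Y ω)) μ) :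
    ∫ ω, f (X ω) ∂μ ≤ ∫ ω, f (Y ω) ∂μ := by
  have hfc : Continuous f := continuousOn_univ.1 (hf.continuousOn isOpen_univ)
  have hlaw : ∀ {Z : Ω → ℝ}, Measurable Z → ∀ x, μ {ω | Z ω < x} = μ.map Z (Iio x) :=
    fun hZ _ => (Measure.map_apply hZ measurableSet_Iio).symm
  have hint : ∀ {Z : Ω → ℝ} {φ : ℝ → ℝ}, Measurable Z → Continuous φ →
      Integrable (φ ∘ Z) μ → Integrable φ (μ.map Z) :=
    fun hZ hφ h => (integrable_map_measure hφ.aestronglyMeasurable hZ.aemeasurable).2 h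
  have hmap : ∀ {Z : Ω → ℝ} {φ : ℝ → ℝ}, Measurable Z → Continuous φ →
      ∫ x, φ x ∂μ.map Z = ∫ ω, φ (Z ω) ∂μ :=
    fun hZ hφ => integral_map hZ.aemeasurable hφ.aestronglyMeasurable
  have := Measure.isProbabilityMeasure_map (μ := μ) hXm.aemeasurable
  have := Measure.isProbabilityMeasure_map (μ := μ) hYm.aemeasurable
  have h := integral_le_integral_of_crossing (hint hXm continuous_id hXi)
    (hint hYm continuous_id hYi)
    ((hmap hXm continuous_id).trans (hmean.trans (hmap hYm continuous_id).symm)) (x₀ := x₀)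
    (by simpa only [hlaw hXm, hlaw hYm] using hcross₁)
    (by simpa only [hlaw hXm, hlaw hYm] using hcross₂) hf (hint hXm hfc hfX) (hint hYm hfc hfY)
  rwa [hmap hXm hfc, hmap hYm hfc] at h
end

section
/- Let x, y ∈ (0,1) with x < y and n ≥ 1. There exists k₀ ∈ {1, …, 2n−1} such that (1/2)·(x^{k₀}(1−x)^{2n−k₀} + y^{k₀}(1−y)^{2n−k₀}) < z^{k₀}(1−z)^{2n−k₀}, where z = (x+y)/2. -/
/-- Some intermediate `ψ_{k₀}` is negative. -/
theorem exists_negative_psi (n : ℕ) (hn : 1 ≤ n) (x y : ℝ)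
    (hx : x ∈ Set.Ioo (0:ℝ) 1) (hy : y ∈ Set.Ioo (0:ℝ) 1) (hxy : x < y) :
    ∃ k₀ : ℕ, 1 ≤ k₀ ∧ k₀ ≤ 2 * n - 1 ∧
      (1 / 2) * (x ^ k₀ * (1 - x) ^ (2 * n - k₀) + y ^ k₀ * (1 - y) ^ (2 * n - k₀))
        < ((x + y) / 2) ^ k₀ * (1 - (x + y) / 2) ^ (2 * n - k₀) := by
  by_contra hcon
  push_neg at hcon
  set z : ℝ := (x + y) / 2 with hz
  have hne : x ≠ y := ne_of_lt hxy
  have hconv : StrictConvexOn ℝ Set.univ (fun t : ℝ => t ^ (2 * n)) :=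
    Even.strictConvexOn_pow (even_two_mul n) (by omega)
  have key : ∀ a b : ℝ, a ≠ b → ((a + b) / 2) ^ (2 * n) < (a ^ (2 * n) + b ^ (2 * n)) / 2 := by
    intro a b hab
    have h := hconv.2 (Set.mem_univ a) (Set.mem_univ b) hab
      (by norm_num : (0:ℝ) < 1/2) (by norm_num : (0:ℝ) < 1/2) (by norm_num)
    simp only [smul_eq_mul] at h
    have h1 : (a + b) / 2 = (1/2:ℝ) * a + (1/2) * b := by ring
    have h2 : (a ^ (2*n) + b ^ (2*n)) / 2 = (1/2:ℝ) * a ^ (2*n) + (1/2) * b ^ (2*n) := by ring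
    rw [h1, h2]; exact h
  have hzx : z ^ (2 * n) < (x ^ (2 * n) + y ^ (2 * n)) / 2 := key x y hne
  have hz1 : (1 - z) ^ (2 * n) < ((1 - x) ^ (2 * n) + (1 - y) ^ (2 * n)) / 2 := by
    have h := key (1 - x) (1 - y) (by intro h; apply hne; linarith)
    have : (1 - x + (1 - y)) / 2 = 1 - z := by rw [hz]; ring
    rwa [this] at h
  -- binomial sums
  have hsum : ∀ t : ℝ, ∑ k ∈ Finset.range (2 * n + 1),
      t ^ k * (1 - t) ^ (2 * n - k) * ((2 * n).choose k : ℝ) = 1 := by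
    intro t
    have h := add_pow t (1 - t) (2 * n)
    have ht : t + (1 - t) = (1 : ℝ) := by ring
    rw [ht, one_pow] at h
    exact h.symm
  have hsplit : ∀ G : ℕ → ℝ, ∑ k ∈ Finset.range (2 * n + 1), G k
      = G 0 + (∑ k ∈ Finset.Icc 1 (2 * n - 1), G k) + G (2 * n) := by
    intro G
    have h2 : 2 * n - 1 + 1 = 2 * n := by omega
    rw [Finset.sum_range_succ, Finset.range_eq_Ico,
      Finset.sum_eq_sum_Ico_succ_bot (by omega : 0 < 2 * n),
      ← Finset.Ico_add_one_right_eq_Icc]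
    simp only [Nat.succ_eq_add_one, h2, zero_add]
  set F : ℝ → ℕ → ℝ := fun t k => t ^ k * (1 - t) ^ (2 * n - k) * ((2 * n).choose k : ℝ) with hF
  have hF0 : ∀ t : ℝ, F t 0 = (1 - t) ^ (2 * n) := by
    intro t; simp [hF]
  have hFtop : ∀ t : ℝ, F t (2 * n) = t ^ (2 * n) := by
    intro t; simp [hF]
  have hid : ∀ t : ℝ, (∑ k ∈ Finset.Icc 1 (2 * n - 1), F t k)
      = 1 - (1 - t) ^ (2 * n) - t ^ (2 * n) := by
    intro t
    have := hsplit (F t)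
    rw [hsum t, hF0, hFtop] at this
    linarith
  have hle : ∑ k ∈ Finset.Icc 1 (2 * n - 1), F z k
      ≤ ∑ k ∈ Finset.Icc 1 (2 * n - 1), ((F x k) + (F y k)) / 2 := by
    apply Finset.sum_le_sum
    intro k hk
    rw [Finset.mem_Icc] at hk
    have h := hcon k hk.1 hk.2
    have hc : (0:ℝ) ≤ ((2 * n).choose k : ℝ) := Nat.cast_nonneg _
    simp only [hF]
    have h2 := mul_le_mul_of_nonneg_right h hc
    linarith
  have hsumavg : ∑ k ∈ Finset.Icc 1 (2 * n - 1), ((F x k) + (F y k)) / 2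
      = ((∑ k ∈ Finset.Icc 1 (2 * n - 1), F x k) + ∑ k ∈ Finset.Icc 1 (2 * n - 1), F y k) / 2 := by
    rw [← Finset.sum_add_distrib, ← Finset.sum_div]
  rw [hsumavg, hid x, hid y, hid z] at hle
  linarith
end

section
/- Let x, y ∈ (0,1) with x < y, z = (x+y)/2, and n ≥ 1. Define D(k) = (1/2)·C(2n,k)·(x^k(1−x)^{2n−k} + y^k(1−y)^{2n−k}) − C(2n,k)·z^k(1−z)^{2n−k}. Then there exist real numbers 0 < t₁ < t₂ < 2n such that D(k) > 0 for integers 0 ≤ k < t₁, D(k) < 0 for integers t₁ < k < t₂, and D(k) > 0 for integers t₂ < k ≤ 2n. -/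
/-!
Write `B_p(k)` for the `B(N, p)` mass at `k` and `z = (x + y) / 2`. For `0 ≤ k ≤ N` the ratio
`B_p(k) / B_z(k)` is `c_p * ρ_p ^ k`, so `D(k) = B_z(k) * (R(k) - 1)` with
`R(t) = (c_x ρ_x ^ t + c_y ρ_y ^ t) / 2` strictly convex in `t`. Strict convexity of `u ↦ u ^ N`
gives `D(0) > 0` and `D(N) > 0`, while `∑ D(k) = 1/2 + 1/2 - 1 = 0` forces some `D(k) < 0`.
Hence `R = 1` at exactly two points `t₁ < t₂` of `(0, N)`, with `R < 1` only between them.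
-/

open Real Set

section StrictConvexOn

variable {s : Set ℝ} {f : ℝ → ℝ} {r t t₁ t₂ : ℝ}

theorem StrictConvexOn.lt_of_mem_Ioo_of_eq (hf : StrictConvexOn ℝ s f) (ht₁ : t₁ ∈ s)
    (ht₂ : t₂ ∈ s) (hf₁ : f t₁ = r) (hf₂ : f t₂ = r) (ht : t ∈ Ioo t₁ t₂) : f t < r := by
  have h := hf.lt_on_openSegment ht₁ ht₂ (ht.1.trans ht.2).ne
    (by rwa [openSegment_eq_Ioo (ht.1.trans ht.2)])
  rwa [hf₁, hf₂, max_self] at h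

theorem StrictConvexOn.lt_of_lt_of_eq (hf : StrictConvexOn ℝ s f) (ht : t ∈ s) (ht₂ : t₂ ∈ s)
    (hf₁ : f t₁ = r) (hf₂ : f t₂ = r) (htt₁ : t < t₁) (h₁₂ : t₁ < t₂) : r < f t := by
  have h := hf.lt_on_openSegment ht ht₂ (htt₁.trans h₁₂).ne
    (by rw [openSegment_eq_Ioo (htt₁.trans h₁₂)]; exact ⟨htt₁, h₁₂⟩)
  rw [hf₁, hf₂] at h
  exact (lt_max_iff.1 h).resolve_right (lt_irrefl r)

theorem StrictConvexOn.lt_of_gt_of_eq (hf : StrictConvexOn ℝ s f) (ht : t ∈ s) (ht₁ : t₁ ∈ s)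
    (hf₁ : f t₁ = r) (hf₂ : f t₂ = r) (h₁₂ : t₁ < t₂) (ht₂t : t₂ < t) : r < f t := by
  have h := hf.lt_on_openSegment ht₁ ht (h₁₂.trans ht₂t).ne
    (by rw [openSegment_eq_Ioo (h₁₂.trans ht₂t)]; exact ⟨h₁₂, ht₂t⟩)
  rw [hf₁, hf₂] at h
  exact (lt_max_iff.1 h).resolve_left (lt_irrefl r)

theorem StrictConvexOn.exists_crossings (hf : StrictConvexOn ℝ univ f) {a b c : ℝ}
    (hac : a < c) (hcb : c < b) (ha : r < f a) (hc : f c < r) (hb : r < f b) :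
    ∃ t₁ t₂, a < t₁ ∧ t₁ < t₂ ∧ t₂ < b ∧ (∀ t, t < t₁ → r < f t) ∧
      (∀ t, t₁ < t → t < t₂ → f t < r) ∧ (∀ t, t₂ < t → r < f t) := by
  have hcont : Continuous f := continuousOn_univ.1 (hf.convexOn.continuousOn isOpen_univ)
  obtain ⟨t₁, ⟨hat₁, ht₁c⟩, hf₁⟩ :=
    intermediate_value_Ioo' hac.le hcont.continuousOn (show r ∈ Ioo (f c) (f a) from ⟨hc, ha⟩)
  obtain ⟨t₂, ⟨hct₂, ht₂b⟩, hf₂⟩ :=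
    intermediate_value_Ioo hcb.le hcont.continuousOn (show r ∈ Ioo (f c) (f b) from ⟨hc, hb⟩)
  have h₁₂ : t₁ < t₂ := ht₁c.trans hct₂
  refine ⟨t₁, t₂, hat₁, h₁₂, ht₂b, fun t ht => ?_, fun t ht₁ ht₂ => ?_, fun t ht => ?_⟩
  · exact hf.lt_of_lt_of_eq trivial trivial hf₁ hf₂ ht h₁₂
  · exact hf.lt_of_mem_Ioo_of_eq trivial trivial hf₁ hf₂ ⟨ht₁, ht₂⟩
  · exact hf.lt_of_gt_of_eq trivial trivial hf₁ hf₂ h₁₂ ht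

theorem StrictConvexOn.const_mul {c : ℝ} (hf : StrictConvexOn ℝ s f) (hc : 0 < c) :
    StrictConvexOn ℝ s fun t => c * f t :=
  ⟨hf.1, fun t ht u hu htu a b ha hb hab => by
    simpa only [smul_eq_mul, mul_add, mul_left_comm c] using
      mul_lt_mul_of_pos_left (hf.2 ht hu htu ha hb hab) hc⟩

end StrictConvexOn

theorem strictConvexOn_exp_mul {β : ℝ} (hβ : β ≠ 0) :
    StrictConvexOn ℝ univ fun t => exp (t * β) := by
  refine ⟨convex_univ, fun s _ t _ hst a b ha hb hab => ?_⟩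
  have hne : s * β ≠ t * β := fun h => hst (mul_right_cancel₀ hβ h)
  simpa only [smul_eq_mul, add_mul, mul_assoc] using
    strictConvexOn_exp.2 trivial trivial hne ha hb hab

theorem pow_midpoint_lt {N : ℕ} (hN : 2 ≤ N) {a b : ℝ} (ha : 0 ≤ a) (hb : 0 ≤ b) (hab : a ≠ b) :
    ((a + b) / 2) ^ N < (a ^ N + b ^ N) / 2 := by
  have h := (strictConvexOn_pow hN).2 ha hb hab (by norm_num : (0 : ℝ) < 1 / 2)
    (by norm_num : (0 : ℝ) < 1 / 2) (by norm_num)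
  simp only [smul_eq_mul, ← mul_add] at h
  rwa [one_div_mul_eq_div, one_div_mul_eq_div] at h

/-- The likelihood ratio of `B(N, p)` to `B(N, z)` at `k` successes is `c * ρ ^ k`, with `ρ` the
odds ratio; `ρ ^ t = exp (t * log ρ)` extends it to a strictly convex function of `t : ℝ`. -/
noncomputable def binomialRatio (N : ℕ) (z p t : ℝ) : ℝ :=
  ((1 - p) / (1 - z)) ^ N * exp (t * log (p * (1 - z) / (z * (1 - p))))

section BinomialRatio

variable {N k : ℕ} {z p : ℝ}

theorem mul_binomialRatio_natCast (hz : z ∈ Ioo (0 : ℝ) 1) (hp : p ∈ Ioo (0 : ℝ) 1)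
    (hk : k ≤ N) :
    z ^ k * (1 - z) ^ (N - k) * binomialRatio N z p k = p ^ k * (1 - p) ^ (N - k) := by
  obtain ⟨hz₀, hz₁⟩ := hz
  obtain ⟨hp₀, hp₁⟩ := hp
  obtain ⟨m, rfl⟩ := Nat.exists_eq_add_of_le hk
  have h1z : 1 - z ≠ 0 := by linarith
  have h1p : 1 - p ≠ 0 := by linarith
  rw [binomialRatio, exp_nat_mul, exp_log (by apply div_pos <;> apply mul_pos <;> linarith),
    Nat.add_sub_cancel_left, div_pow, div_pow, mul_pow, mul_pow, pow_add, pow_add]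
  field_simp

theorem strictConvexOn_binomialRatio (N : ℕ) (hz : z ∈ Ioo (0 : ℝ) 1) (hp : p ∈ Ioo (0 : ℝ) 1)
    (hpz : p ≠ z) : StrictConvexOn ℝ univ (binomialRatio N z p) := by
  obtain ⟨hz₀, hz₁⟩ := hz
  obtain ⟨hp₀, hp₁⟩ := hp
  have hodds : p * (1 - z) / (z * (1 - p)) ≠ 1 := by
    rw [Ne, div_eq_one_iff_eq (by apply mul_ne_zero <;> linarith)]
    intro h; apply hpz; linarith
  refine (strictConvexOn_exp_mul ?_).const_mul (by apply pow_pos; apply div_pos <;> linarith)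
  exact log_ne_zero_of_pos_of_ne_one (by apply div_pos <;> apply mul_pos <;> linarith) hodds

end BinomialRatio

/-- At `k ≤ N`, the mass of the mixture `(B(N, x) + B(N, y)) / 2` relative to that of
`B(N, (x + y) / 2)`. -/
noncomputable def binomialMixtureRatio (N : ℕ) (x y t : ℝ) : ℝ :=
  (binomialRatio N ((x + y) / 2) x t + binomialRatio N ((x + y) / 2) y t) / 2

noncomputable def binomialPmfGap (N : ℕ) (x y : ℝ) (k : ℕ) : ℝ :=
  ((bernsteinPolynomial ℝ N k).eval x + (bernsteinPolynomial ℝ N k).eval y) / 2 -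
    (bernsteinPolynomial ℝ N k).eval ((x + y) / 2)

section BinomialPmfGap

variable {N : ℕ} {x y : ℝ}

theorem add_div_two_mem_Ioo {a b : ℝ} (hx : x ∈ Ioo a b) (hy : y ∈ Ioo a b) :
    (x + y) / 2 ∈ Ioo a b :=
  ⟨by linarith [hx.1, hy.1], by linarith [hx.2, hy.2]⟩

theorem strictConvexOn_binomialMixtureRatio (N : ℕ) (hx : x ∈ Ioo (0 : ℝ) 1)
    (hy : y ∈ Ioo (0 : ℝ) 1) (hxy : x ≠ y) :
    StrictConvexOn ℝ univ (binomialMixtureRatio N x y) := by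
  have hz := add_div_two_mem_Ioo hx hy
  have hxz : x ≠ (x + y) / 2 := fun h => hxy (by linarith)
  have hyz : y ≠ (x + y) / 2 := fun h => hxy (by linarith)
  refine (((strictConvexOn_binomialRatio N hz hx hxz).add
    (strictConvexOn_binomialRatio N hz hy hyz)).const_mul (half_pos one_pos)).congr fun t _ => ?_
  simp only [binomialMixtureRatio, Pi.add_apply]
  ring

theorem eval_bernsteinPolynomial (N k : ℕ) (p : ℝ) :
    (bernsteinPolynomial ℝ N k).eval p = N.choose k * p ^ k * (1 - p) ^ (N - k) := by
  simp [bernsteinPolynomial]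

theorem eval_bernsteinPolynomial_pos {p : ℝ} (hp : p ∈ Ioo (0 : ℝ) 1) {k : ℕ} (hk : k ≤ N) :
    0 < (bernsteinPolynomial ℝ N k).eval p := by
  have : (0 : ℝ) < N.choose k := by exact_mod_cast Nat.choose_pos hk
  rw [eval_bernsteinPolynomial]
  exact mul_pos (mul_pos this (pow_pos hp.1 _)) (pow_pos (sub_pos.2 hp.2) _)

theorem binomialPmfGap_eq (N : ℕ) (x y : ℝ) (k : ℕ) :
    binomialPmfGap N x y k =
      1 / 2 * (N.choose k : ℝ) * (x ^ k * (1 - x) ^ (N - k) + y ^ k * (1 - y) ^ (N - k))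
        - (N.choose k : ℝ) * ((x + y) / 2) ^ k * (1 - (x + y) / 2) ^ (N - k) := by
  simp only [binomialPmfGap, eval_bernsteinPolynomial]
  ring

theorem binomialPmfGap_eq_mul (hx : x ∈ Ioo (0 : ℝ) 1) (hy : y ∈ Ioo (0 : ℝ) 1) {k : ℕ}
    (hk : k ≤ N) : binomialPmfGap N x y k =
      (bernsteinPolynomial ℝ N k).eval ((x + y) / 2) * (binomialMixtureRatio N x y k - 1) := by
  have hz := add_div_two_mem_Ioo hx hy
  simp only [binomialPmfGap, binomialMixtureRatio, eval_bernsteinPolynomial]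
  linear_combination (-(N.choose k : ℝ) / 2) * mul_binomialRatio_natCast hz hx hk +
    (-(N.choose k : ℝ) / 2) * mul_binomialRatio_natCast hz hy hk

theorem binomialPmfGap_pos_iff (hx : x ∈ Ioo (0 : ℝ) 1) (hy : y ∈ Ioo (0 : ℝ) 1) {k : ℕ}
    (hk : k ≤ N) : 0 < binomialPmfGap N x y k ↔ 1 < binomialMixtureRatio N x y k := by
  rw [binomialPmfGap_eq_mul hx hy hk,
    mul_pos_iff_of_pos_left (eval_bernsteinPolynomial_pos (add_div_two_mem_Ioo hx hy) hk),
    sub_pos]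

theorem binomialPmfGap_neg_iff (hx : x ∈ Ioo (0 : ℝ) 1) (hy : y ∈ Ioo (0 : ℝ) 1) {k : ℕ}
    (hk : k ≤ N) : binomialPmfGap N x y k < 0 ↔ binomialMixtureRatio N x y k < 1 := by
  have hw := eval_bernsteinPolynomial_pos (add_div_two_mem_Ioo hx hy) hk
  rw [binomialPmfGap_eq_mul hx hy hk]
  exact ⟨fun h => sub_neg.1 (neg_of_mul_neg_right h hw.le),
    fun h => mul_neg_of_pos_of_neg hw (sub_neg.2 h)⟩

theorem sum_binomialPmfGap (N : ℕ) (x y : ℝ) :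
    ∑ k ∈ Finset.range (N + 1), binomialPmfGap N x y k = 0 := by
  have h (p : ℝ) : ∑ k ∈ Finset.range (N + 1), (bernsteinPolynomial ℝ N k).eval p = 1 := by
    rw [← Polynomial.eval_finsetSum, bernsteinPolynomial.sum, Polynomial.eval_one]
  simp only [binomialPmfGap, Finset.sum_sub_distrib, ← Finset.sum_div, Finset.sum_add_distrib, h]
  norm_num

theorem binomialPmfGap_zero_pos (hN : 2 ≤ N) (hx : x ≤ 1) (hy : y ≤ 1) (hxy : x ≠ y) :
    0 < binomialPmfGap N x y 0 := by
  have h := pow_midpoint_lt hN (sub_nonneg.2 hx) (sub_nonneg.2 hy) (sub_right_injective.ne hxy)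
  rw [show (1 - x + (1 - y)) / 2 = 1 - (x + y) / 2 by ring] at h
  rw [binomialPmfGap_eq]
  simp only [Nat.choose_zero_right, pow_zero, Nat.sub_zero, Nat.cast_one]
  linarith

theorem binomialPmfGap_self_pos (hN : 2 ≤ N) (hx : 0 ≤ x) (hy : 0 ≤ y) (hxy : x ≠ y) :
    0 < binomialPmfGap N x y N := by
  have h := pow_midpoint_lt hN hx hy hxy
  rw [binomialPmfGap_eq]
  simp only [Nat.choose_self, Nat.sub_self, pow_zero, Nat.cast_one]
  linarith

theorem exists_binomialPmfGap_neg (hN : 2 ≤ N) (hx : x ∈ Icc (0 : ℝ) 1) (hy : y ∈ Icc (0 : ℝ) 1)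
    (hxy : x ≠ y) : ∃ k < N, 0 < k ∧ binomialPmfGap N x y k < 0 := by
  obtain ⟨k, hkN, hk⟩ : ∃ k ≤ N, binomialPmfGap N x y k < 0 := by
    by_contra! hnonneg
    refine (Finset.sum_pos' (fun k hk => hnonneg k (Nat.lt_succ_iff.1 (Finset.mem_range.1 hk)))
      ⟨0, Finset.mem_range.2 N.succ_pos, binomialPmfGap_zero_pos hN hx.2 hy.2 hxy⟩).ne' ?_
    exact sum_binomialPmfGap N x y
  refine ⟨k, lt_of_le_of_ne hkN ?_, Nat.pos_of_ne_zero ?_, hk⟩ <;> rintro rfl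
  · exact lt_asymm (binomialPmfGap_self_pos hN hx.1 hy.1 hxy) hk
  · exact lt_asymm (binomialPmfGap_zero_pos hN hx.2 hy.2 hxy) hk

end BinomialPmfGap

theorem binomialPmfGap_sign_pattern {N : ℕ} (hN : 2 ≤ N) {x y : ℝ} (hx : x ∈ Ioo (0 : ℝ) 1)
    (hy : y ∈ Ioo (0 : ℝ) 1) (hxy : x ≠ y) :
    ∃ t₁ t₂ : ℝ, 0 < t₁ ∧ t₁ < t₂ ∧ t₂ < N ∧
      (∀ k : ℕ, (k : ℝ) < t₁ → 0 < binomialPmfGap N x y k) ∧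
      (∀ k : ℕ, t₁ < k → (k : ℝ) < t₂ → binomialPmfGap N x y k < 0) ∧
      (∀ k : ℕ, t₂ < k → k ≤ N → 0 < binomialPmfGap N x y k) := by
  obtain ⟨c, hcN, hc0, hc⟩ :=
    exists_binomialPmfGap_neg hN (Ioo_subset_Icc_self hx) (Ioo_subset_Icc_self hy) hxy
  have h0 := (binomialPmfGap_pos_iff hx hy N.zero_le).1
    (binomialPmfGap_zero_pos hN hx.2.le hy.2.le hxy)
  have hN' := (binomialPmfGap_pos_iff hx hy le_rfl).1
    (binomialPmfGap_self_pos hN hx.1.le hy.1.le hxy)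
  obtain ⟨t₁, t₂, h0t₁, ht₁₂, ht₂N, hlow, hmid, hhigh⟩ :=
    (strictConvexOn_binomialMixtureRatio N hx hy hxy).exists_crossings (a := 0) (b := N)
      (by exact_mod_cast hc0) (by exact_mod_cast hcN) (by simpa using h0)
      ((binomialPmfGap_neg_iff hx hy hcN.le).1 hc) hN'
  refine ⟨t₁, t₂, h0t₁, ht₁₂, ht₂N, fun k hk => ?_, fun k hk₁ hk₂ => ?_, fun k hk hkN => ?_⟩
  · have hkN : k ≤ N := by exact_mod_cast (hk.trans (ht₁₂.trans ht₂N)).le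
    exact (binomialPmfGap_pos_iff hx hy hkN).2 (hlow k hk)
  · have hkN : k ≤ N := by exact_mod_cast (hk₂.trans ht₂N).le
    exact (binomialPmfGap_neg_iff hx hy hkN).2 (hmid k hk₁ hk₂)
  · exact (binomialPmfGap_pos_iff hx hy hkN).2 (hhigh k hk)

/-- Sign pattern `+,−,+` of the difference of probability mass functions. -/
theorem pmf_difference_sign_pattern (n : ℕ) (hn : 1 ≤ n) (x y : ℝ)
    (hx : x ∈ Set.Ioo (0:ℝ) 1) (hy : y ∈ Set.Ioo (0:ℝ) 1) (hxy : x < y) :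
    ∃ t₁ t₂ : ℝ, 0 < t₁ ∧ t₁ < t₂ ∧ t₂ < 2 * n ∧
      (∀ k : ℕ, (k : ℝ) < t₁ →
        0 < (1 / 2) * ((2 * n).choose k : ℝ) *
              (x ^ k * (1 - x) ^ (2 * n - k) + y ^ k * (1 - y) ^ (2 * n - k))
            - ((2 * n).choose k : ℝ) * ((x + y) / 2) ^ k * (1 - (x + y) / 2) ^ (2 * n - k)) ∧
      (∀ k : ℕ, t₁ < (k : ℝ) → (k : ℝ) < t₂ →
        (1 / 2) * ((2 * n).choose k : ℝ) *
              (x ^ k * (1 - x) ^ (2 * n - k) + y ^ k * (1 - y) ^ (2 * n - k))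
            - ((2 * n).choose k : ℝ) * ((x + y) / 2) ^ k * (1 - (x + y) / 2) ^ (2 * n - k) < 0) ∧
      (∀ k : ℕ, t₂ < (k : ℝ) → k ≤ 2 * n →
        0 < (1 / 2) * ((2 * n).choose k : ℝ) *
              (x ^ k * (1 - x) ^ (2 * n - k) + y ^ k * (1 - y) ^ (2 * n - k))
            - ((2 * n).choose k : ℝ) * ((x + y) / 2) ^ k * (1 - (x + y) / 2) ^ (2 * n - k)) := by
  obtain ⟨t₁, t₂, h0t₁, ht₁₂, ht₂N, hlow, hmid, hhigh⟩ :=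
    binomialPmfGap_sign_pattern (N := 2 * n) (by omega) hx hy hxy.ne
  simp only [binomialPmfGap_eq] at hlow hmid hhigh
  exact ⟨t₁, t₂, h0t₁, ht₁₂, by exact_mod_cast ht₂N, hlow, hmid, hhigh⟩
end

section
/- There exist random variables for which the inequality F_{X+Y} ≤_cx (1/2)(F_{X₁+X₂} + F_{Y₁+Y₂}) fails when the binomial hypothesis is dropped. Specifically, let μ_{X+Y} = (1/4)(δ₁+δ₃+δ₅+δ₇), μ_{X₁+X₂} = (1/4)(δ₂+δ₆)+(1/2)δ₄, μ_{Y₁+Y₂} = (1/4)(δ₀+δ₈)+(1/2)δ₄. Then there exists a continuous convex function f : [0,8] → ℝ with E f(X+Y) > (1/2)(E f(X₁+X₂) + E f(Y₁+Y₂)). -/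
/-- Counterexample: for the distributions
`μ_{X+Y} = (1/4)(δ₁+δ₃+δ₅+δ₇)`, `μ_{X₁+X₂} = (1/4)(δ₂+δ₆)+(1/2)δ₄`,
`μ_{Y₁+Y₂} = (1/4)(δ₀+δ₈)+(1/2)δ₄`, the convex order relation fails:
some continuous convex function on `[0,8]` violates the inequality. -/
theorem cx_order_counterexample :
    ∃ f : ℝ → ℝ, ContinuousOn f (Set.Icc 0 8) ∧ ConvexOn ℝ (Set.Icc 0 8) f ∧
      (1 / 2) * ((1 / 4) * (f 2 + f 6) + (1 / 2) * f 4
          + ((1 / 4) * (f 0 + f 8) + (1 / 2) * f 4))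
        < (1 / 4) * (f 1 + f 3 + f 5 + f 7) := by
  refine ⟨fun t => max (4 - t) 0, ?_, ?_, ?_⟩
  · exact ((continuous_const.sub continuous_id).max continuous_const).continuousOn
  · have h1 : ConvexOn ℝ (Set.Icc (0:ℝ) 8) (fun t => 4 - t) := by
      have := (-(LinearMap.id (R := ℝ) (M := ℝ))).convexOn (convex_Icc 0 8)
      exact (this.add_const 4).congr (by intro x _; simp [sub_eq_add_neg, add_comm])
    exact h1.sup (convexOn_const 0 (convex_Icc 0 8))
  · norm_num
end

section
/- Let F₁, F₂ : [a,b] → ℝ be of bounded variation with F₁(a) = F₂(a). Then ∫_a^b f dF₁ ≤ ∫_a^b f dF₂ for all continuous convex f : [a,b] → ℝ if and only if: F₁(b) = F₂(b), ∫_a^b F₁(x) dx = ∫_a^b F₂(x) dx, and ∫_a^x F₁(t) dt ≤ ∫_a^x F₂(t) dt for all x ∈ (a,b). -/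
/-!
Write `G = F₂ - F₁` and `H x = ∫_a^x G`, so that the conditions say `G a = G b = 0`, `H b = 0`
and `H ≥ 0`. On a uniform grid, summation by parts turns the difference of the left
Riemann–Stieltjes sums of a convex `f` into `-∑ Δfᵢ G(tᵢ₊₁)`, and a second summation by parts
against the Riemann sums of `H` bounds this below by the values `H(tⱼ) ≥ 0` weighted by the
second differences of `f`, which are nonnegative by convexity. The error is `O(ε Var G)`, where
`ε` bounds the oscillation of `f` on a grid cell. Conversely `±1`, `±x` and `max x c` are convex,
and their Riemann–Stieltjes integrals `b F(b) - c F(a) - ∫_c^b F` read off the three conditions.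
-/

open Finset

/-- `IsRSIntegral f F a b I` means the Riemann–Stieltjes integral `∫_a^b f dF`
exists and equals `I`: Riemann–Stieltjes sums over tagged partitions of
`[a,b]` with mesh smaller than `δ` are within `ε` of `I`. -/
def IsRSIntegral (f F : ℝ → ℝ) (a b : ℝ) (I : ℝ) : Prop :=
  ∀ ε > (0:ℝ), ∃ δ > (0:ℝ), ∀ (n : ℕ) (t : ℕ → ℝ) (ξ : ℕ → ℝ),
    0 < n → t 0 = a → t n = b →
    (∀ i < n, t i < t (i + 1)) →
    (∀ i < n, t (i + 1) - t i < δ) →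
    (∀ i < n, ξ i ∈ Set.Icc (t i) (t (i + 1))) →
    |(∑ i ∈ range n, f (ξ i) * (F (t (i + 1)) - F (t i))) - I| < ε

open MeasureTheory

theorem sum_mul_sub_by_parts (f g : ℕ → ℝ) (n : ℕ) :
    ∑ i ∈ range n, f i * (g (i + 1) - g i) =
      f n * g n - f 0 * g 0 - ∑ i ∈ range n, (f (i + 1) - f i) * g (i + 1) := by
  induction n with
  | zero => simp
  | succ n ih => rw [sum_range_succ, sum_range_succ, ih]; ring

theorem sum_mul_le_of_monotone_of_neg_le_partialSum {d g : ℕ → ℝ} {n : ℕ} {L : ℝ}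
    (hd : ∀ i, i + 1 < n → d i ≤ d (i + 1))
    (hg : ∀ j ≤ n, -L ≤ ∑ i ∈ range j, g i) :
    ∑ i ∈ range n, d i * g i ≤
      d (n - 1) * ∑ i ∈ range n, g i + L * (d (n - 1) - d 0) := by
  have hparts := sum_range_by_parts d g n
  simp only [smul_eq_mul] at hparts
  have hlow : ∑ i ∈ range (n - 1), (d (i + 1) - d i) * -L ≤
      ∑ i ∈ range (n - 1), (d (i + 1) - d i) * ∑ k ∈ range (i + 1), g k :=
    sum_le_sum fun i hi => mul_le_mul_of_nonneg_left (hg (i + 1) (by simp at hi; omega))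
      (sub_nonneg.2 (hd i (by simp at hi; omega)))
  rw [← sum_mul, sum_range_sub] at hlow
  linarith

theorem mem_Icc_of_forall_le_succ {t : ℕ → ℝ} {n : ℕ} (ht : ∀ i < n, t i ≤ t (i + 1))
    {i : ℕ} (hi : i ≤ n) : t i ∈ Set.Icc (t 0) (t n) := by
  have hmono : MonotoneOn t (Set.Iic n) :=
    monotoneOn_of_le_add_one Set.ordConnected_Iic fun j _ _ hj => ht j hj
  exact ⟨hmono (Nat.zero_le n) hi (Nat.zero_le i), hmono hi (Set.mem_Iic.2 le_rfl) hi⟩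

theorem BoundedVariationOn.sub {f g : ℝ → ℝ} {s : Set ℝ} (hf : BoundedVariationOn f s)
    (hg : BoundedVariationOn g s) : BoundedVariationOn (f - g) s := by
  refine ne_top_of_le_ne_top (ENNReal.add_ne_top.2 ⟨hf, hg⟩)
    (iSup_le fun ⟨n, u, hu, us⟩ => ?_)
  calc ∑ i ∈ range n, edist ((f - g) (u (i + 1))) ((f - g) (u i))
      ≤ ∑ i ∈ range n, (edist (f (u (i + 1))) (f (u i)) + edist (g (u (i + 1))) (g (u i))) :=
        sum_le_sum fun i _ => by
          simp only [Pi.sub_apply, sub_eq_add_neg, ← edist_neg_neg (g _)]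
          exact edist_add_add_le _ _ _ _
    _ ≤ eVariationOn f s + eVariationOn g s := by
        rw [sum_add_distrib]
        exact add_le_add (eVariationOn.sum_le hu us) (eVariationOn.sum_le hu us)

theorem BoundedVariationOn.integrableOn_Icc {F : ℝ → ℝ} {a b : ℝ}
    (hF : BoundedVariationOn F (Set.Icc a b)) : IntegrableOn F (Set.Icc a b) := by
  obtain ⟨p, q, hp, hq, rfl⟩ := hF.locallyBoundedVariationOn.exists_monotoneOn_sub_monotoneOn
  exact (hp.integrableOn_isCompact isCompact_Icc).sub (hq.integrableOn_isCompact isCompact_Icc)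

section Variation

variable {F : ℝ → ℝ} {a b : ℝ}

theorem BoundedVariationOn.abs_sub_le_variationOnFromTo
    (hF : BoundedVariationOn F (Set.Icc a b)) {u u' x y : ℝ} (hu : a ≤ u) (hu' : u' ≤ b)
    (hx : x ∈ Set.Icc u u') (hy : y ∈ Set.Icc u u') :
    |F x - F y| ≤
      variationOnFromTo F (Set.Icc a b) a u' - variationOnFromTo F (Set.Icc a b) a u := by
  have mem : ∀ z ∈ Set.Icc u u', z ∈ Set.Icc a b := fun z hz =>
    ⟨hu.trans hz.1, hz.2.trans hu'⟩
  have hF' := hF.locallyBoundedVariationOn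
  have ha : a ∈ Set.Icc a b := ⟨le_rfl, hu.trans (hx.1.trans (hx.2.trans hu'))⟩
  have hW := variationOnFromTo.monotoneOn hF' ha
  wlog hxy : x ≤ y generalizing x y
  · rw [abs_sub_comm]
    exact this hy hx (le_of_not_ge hxy)
  calc |F x - F y| = |F y - F x| := abs_sub_comm _ _
    _ ≤ variationOnFromTo F (Set.Icc a b) a y - variationOnFromTo F (Set.Icc a b) a x :=
      variationOnFromTo.abs_sub_le_sub_of_le hF' ha (mem x hx) (mem y hy) hxy
    _ ≤ _ := sub_le_sub (hW (mem y hy) (mem u' ⟨hx.1.trans hx.2, le_rfl⟩) hy.2)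
      (hW (mem u ⟨le_rfl, hx.1.trans hx.2⟩) (mem x hx) hx.1)

theorem BoundedVariationOn.intervalIntegrable_of_Ioc_subset
    (hF : BoundedVariationOn F (Set.Icc a b)) {v v' : ℝ} (hvv : v ≤ v')
    (hsub : Set.Ioc v v' ⊆ Set.Icc a b) : IntervalIntegrable F volume v v' :=
  (intervalIntegrable_iff_integrableOn_Ioc_of_le hvv).2 (hF.integrableOn_Icc.mono_set hsub)

theorem BoundedVariationOn.abs_mul_sub_integral_le (hF : BoundedVariationOn F (Set.Icc a b))
    {u u' v v' τ : ℝ} (hu : a ≤ u) (hu' : u' ≤ b) (hvv : v ≤ v')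
    (hcell : Set.Ioc v v' ⊆ Set.Icc u u') (hτ : τ ∈ Set.Icc u u') :
    |F τ * (v' - v) - ∫ x in v..v', F x| ≤
      (v' - v) * (variationOnFromTo F (Set.Icc a b) a u' -
        variationOnFromTo F (Set.Icc a b) a u) := by
  have hint := hF.intervalIntegrable_of_Ioc_subset hvv
    (hcell.trans (Set.Icc_subset_Icc hu hu'))
  have hconst : F τ * (v' - v) - ∫ x in v..v', F x = ∫ x in v..v', (F τ - F x) := by
    rw [intervalIntegral.integral_sub intervalIntegrable_const hint,
      intervalIntegral.integral_const, smul_eq_mul, mul_comm]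
  rw [hconst, ← abs_of_nonneg (sub_nonneg.2 hvv), mul_comm]
  refine (Real.norm_eq_abs _).symm.trans_le
    (intervalIntegral.norm_integral_le_of_norm_le_const fun x hx => ?_)
  rw [Set.uIoc_of_le hvv] at hx
  rw [Real.norm_eq_abs]
  exact hF.abs_sub_le_variationOnFromTo hu hu' hτ (hcell hx)

theorem BoundedVariationOn.abs_sum_mul_sub_integral_le
    (hF : BoundedVariationOn F (Set.Icc a b)) {u v τ : ℕ → ℝ} {n : ℕ} {h : ℝ}
    (hu : ∀ i ≤ n, u i ∈ Set.Icc a b) (hv : ∀ i < n, v i ≤ v (i + 1))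
    (hcell : ∀ i < n, Set.Ioc (v i) (v (i + 1)) ⊆ Set.Icc (u i) (u (i + 1)))
    (hτ : ∀ i < n, τ i ∈ Set.Icc (u i) (u (i + 1))) (hh : ∀ i < n, v (i + 1) - v i ≤ h) :
    |∑ i ∈ range n, F (τ i) * (v (i + 1) - v i) - ∫ x in v 0..v n, F x| ≤
      h * (variationOnFromTo F (Set.Icc a b) a (u n) -
        variationOnFromTo F (Set.Icc a b) a (u 0)) := by
  set W := variationOnFromTo F (Set.Icc a b) a
  have hcell_ab : ∀ i < n, Set.Ioc (v i) (v (i + 1)) ⊆ Set.Icc a b := fun i hi =>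
    (hcell i hi).trans (Set.Icc_subset_Icc (hu i hi.le).1 (hu (i + 1) hi).2)
  have hW : ∀ i < n, 0 ≤ W (u (i + 1)) - W (u i) := fun i hi =>
    sub_nonneg.2 <| variationOnFromTo.monotoneOn hF.locallyBoundedVariationOn
      ⟨le_rfl, (hu i hi.le).1.trans (hu i hi.le).2⟩ (hu i hi.le) (hu (i + 1) hi)
      ((hτ i hi).1.trans (hτ i hi).2)
  rw [← intervalIntegral.sum_integral_adjacent_intervals fun i hi =>
    hF.intervalIntegrable_of_Ioc_subset (hv i hi) (hcell_ab i hi), ← sum_sub_distrib,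
    ← sum_range_sub (fun i => W (u i)), mul_sum]
  refine (abs_sum_le_sum_abs _ _).trans (sum_le_sum fun i hi => ?_)
  rw [mem_range] at hi
  calc _ ≤ (v (i + 1) - v i) * (W (u (i + 1)) - W (u i)) :=
        hF.abs_mul_sub_integral_le (hu i hi.le).1 (hu (i + 1) hi).2 (hv i hi) (hcell i hi)
          (hτ i hi)
    _ ≤ h * (W (u (i + 1)) - W (u i)) := mul_le_mul_of_nonneg_right (hh i hi) (hW i hi)

theorem BoundedVariationOn.abs_sum_mul_sub_le (hF : BoundedVariationOn F (Set.Icc a b))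
    {t φ : ℕ → ℝ} {n : ℕ} {η : ℝ} (ht : ∀ i ≤ n, t i ∈ Set.Icc a b)
    (htt : ∀ i < n, t i ≤ t (i + 1)) (hφ : ∀ i < n, |φ i| ≤ η) :
    |∑ i ∈ range n, φ i * (F (t (i + 1)) - F (t i))| ≤
      η * (variationOnFromTo F (Set.Icc a b) a (t n) -
        variationOnFromTo F (Set.Icc a b) a (t 0)) := by
  rw [← sum_range_sub (fun i => variationOnFromTo F (Set.Icc a b) a (t i)), mul_sum]
  refine (abs_sum_le_sum_abs _ _).trans (sum_le_sum fun i hi => ?_)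
  rw [mem_range] at hi
  rw [abs_mul]
  exact mul_le_mul (hφ i hi) (hF.abs_sub_le_variationOnFromTo (ht i hi.le).1 (ht (i + 1) hi).2
    ⟨htt i hi, le_rfl⟩ ⟨le_rfl, htt i hi⟩) (abs_nonneg _) ((abs_nonneg _).trans (hφ i hi))

end Variation

theorem BoundedVariationOn.intervalIntegrable {F : ℝ → ℝ} {a b x y : ℝ}
    (hF : BoundedVariationOn F (Set.Icc a b)) (hx : x ∈ Set.Icc a b) (hy : y ∈ Set.Icc a b) :
    IntervalIntegrable F volume x y :=
  (hF.integrableOn_Icc.mono_set (Set.uIcc_subset_Icc hx hy)).intervalIntegrable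

theorem Ioc_max_max_subset_Icc {α : Type*} [LinearOrder α] (x y c : α) :
    Set.Ioc (max x c) (max y c) ⊆ Set.Icc x y := fun _ hz =>
  ⟨(le_max_left x c).trans hz.1.le,
    (le_max_iff.1 hz.2).resolve_right (not_le.2 ((le_max_right x c).trans_lt hz.1))⟩

section RiemannStieltjes

variable {f F : ℝ → ℝ} {a b : ℝ}

theorem isRSIntegral_const (k : ℝ) : IsRSIntegral (fun _ => k) F a b (k * (F b - F a)) :=
  fun ε hε => ⟨1, one_pos, fun n t _ _ h0 hn _ _ _ => by
    rwa [← mul_sum, sum_range_sub (fun i => F (t i)), h0, hn, sub_self, abs_zero]⟩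

theorem IsRSIntegral.neg {I : ℝ} (h : IsRSIntegral f F a b I) :
    IsRSIntegral (fun x => -f x) F a b (-I) := fun ε hε => by
  obtain ⟨δ, hδ, hI⟩ := h ε hε
  refine ⟨δ, hδ, fun n t ξ h₁ h₂ h₃ h₄ h₅ h₆ => ?_⟩
  simpa only [neg_mul, sum_neg_distrib, neg_sub_neg, abs_sub_comm] using
    hI n t ξ h₁ h₂ h₃ h₄ h₅ h₆

theorem abs_sum_max_mul_sub_sub_le (hF : BoundedVariationOn F (Set.Icc a b)) {c δ : ℝ}
    (hc : c ∈ Set.Icc a b) {t : ℕ → ℝ} {n : ℕ} (h0 : t 0 = a) (hn : t n = b)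
    (htt : ∀ i < n, t i ≤ t (i + 1)) (hmesh : ∀ i < n, t (i + 1) - t i ≤ δ) :
    |∑ i ∈ range n, max (t i) c * (F (t (i + 1)) - F (t i)) -
      (b * F b - c * F a - ∫ x in c..b, F x)| ≤ δ * variationOnFromTo F (Set.Icc a b) a b := by
  have hts : ∀ i ≤ n, t i ∈ Set.Icc a b := fun i hi =>
    h0 ▸ hn ▸ mem_Icc_of_forall_le_succ htt hi
  -- summation by parts leaves a Riemann sum of `F` over the points `max (t i) c`,
  -- which partition `[c, b]`
  have hparts := sum_mul_sub_by_parts (fun i => max (t i) c) (fun i => F (t i)) n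
  rw [h0, hn, max_eq_left hc.2, max_eq_right hc.1] at hparts
  have hriem := hF.abs_sum_mul_sub_integral_le (v := fun i => max (t i) c)
    (τ := fun i => t (i + 1)) hts (fun i hi => max_le_max_right c (htt i hi))
    (fun i _ => Ioc_max_max_subset_Icc _ _ _) (fun i hi => ⟨htt i hi, le_rfl⟩)
    (fun i hi => (le_abs_self _).trans <| (abs_max_sub_max_le_abs _ _ _).trans <|
      (abs_of_nonneg (sub_nonneg.2 (htt i hi))).trans_le (hmesh i hi))
  rw [h0, hn, max_eq_left hc.2, max_eq_right hc.1, variationOnFromTo.self, sub_zero] at hriem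
  rw [hparts, ← abs_neg]
  convert hriem using 2
  simp only [neg_sub, mul_comm (F _)]
  ring

theorem isRSIntegral_max (hF : BoundedVariationOn F (Set.Icc a b)) {c : ℝ}
    (hc : c ∈ Set.Icc a b) :
    IsRSIntegral (fun x => max x c) F a b (b * F b - c * F a - ∫ x in c..b, F x) := by
  set V := variationOnFromTo F (Set.Icc a b) a b
  have hV : 0 ≤ V := variationOnFromTo.nonneg_of_le _ _ (hc.1.trans hc.2)
  intro ε hε
  refine ⟨ε / (2 * V + 1), by positivity, fun n t ξ _ h0 hn ht hmesh hξ => ?_⟩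
  set δ := ε / (2 * V + 1)
  have htt : ∀ i < n, t i ≤ t (i + 1) := fun i hi => (ht i hi).le
  have hts : ∀ i ≤ n, t i ∈ Set.Icc a b := fun i hi =>
    h0 ▸ hn ▸ mem_Icc_of_forall_le_succ htt hi
  have hWt : variationOnFromTo F (Set.Icc a b) a (t n) -
      variationOnFromTo F (Set.Icc a b) a (t 0) = V := by
    rw [h0, hn, variationOnFromTo.self, sub_zero]
  have htag : |∑ i ∈ range n, (max (ξ i) c - max (t i) c) * (F (t (i + 1)) - F (t i))| ≤
      δ * V :=
    hWt ▸ hF.abs_sum_mul_sub_le hts htt fun i hi => (abs_max_sub_max_le_abs _ _ _).trans <|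
      abs_sub_le_iff.2
        ⟨by linarith [(hξ i hi).2, hmesh i hi], by linarith [(hξ i hi).1, hmesh i hi, htt i hi]⟩
  have hleft := abs_sum_max_mul_sub_sub_le hF hc h0 hn htt fun i hi => (hmesh i hi).le
  have hδ : δ * (2 * V + 1) = ε := div_mul_cancel₀ _ (by positivity)
  calc _ = |∑ i ∈ range n, (max (ξ i) c - max (t i) c) * (F (t (i + 1)) - F (t i)) +
        (∑ i ∈ range n, max (t i) c * (F (t (i + 1)) - F (t i)) -
          (b * F b - c * F a - ∫ x in c..b, F x))| := by
        rw [← add_sub_assoc, ← sum_add_distrib]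
        exact congrArg (|· - _|) (sum_congr rfl fun i _ => by ring)
    _ ≤ _ := abs_add_le _ _
    _ ≤ δ * V + δ * V := add_le_add htag hleft
    _ < ε := by nlinarith [show 0 < δ by positivity]

end RiemannStieltjes

theorem integral_conditions_of_forall_convexOn_le {a b : ℝ} (hab : a ≤ b) {F₁ F₂ : ℝ → ℝ}
    (hF₁ : BoundedVariationOn F₁ (Set.Icc a b)) (hF₂ : BoundedVariationOn F₂ (Set.Icc a b))
    (ha : F₁ a = F₂ a)
    (hle : ∀ f : ℝ → ℝ, ContinuousOn f (Set.Icc a b) → ConvexOn ℝ (Set.Icc a b) f →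
      ∀ I₁ I₂ : ℝ, IsRSIntegral f F₁ a b I₁ → IsRSIntegral f F₂ a b I₂ → I₁ ≤ I₂) :
    F₁ b = F₂ b ∧ (∫ x in a..b, F₁ x) = ∫ x in a..b, F₂ x ∧
      ∀ x ∈ Set.Ioo a b, (∫ t in a..x, F₁ t) ≤ ∫ t in a..x, F₂ t := by
  have hcont : ∀ c, ContinuousOn (fun x => max x c) (Set.Icc a b) := fun c =>
    (continuous_id.max continuous_const).continuousOn
  have hconv : ∀ c, ConvexOn ℝ (Set.Icc a b) (fun x => max x c) := fun c =>
    (convexOn_id (convex_Icc a b)).sup (convexOn_const c (convex_Icc a b))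
  have hmax : ∀ c ∈ Set.Icc a b, b * F₁ b - c * F₁ a - ∫ x in c..b, F₁ x ≤
      b * F₂ b - c * F₂ a - ∫ x in c..b, F₂ x := fun c hc =>
    hle _ (hcont c) (hconv c) _ _ (isRSIntegral_max hF₁ hc) (isRSIntegral_max hF₂ hc)
  have hconst : ∀ k : ℝ, k * (F₁ b - F₁ a) ≤ k * (F₂ b - F₂ a) := fun k =>
    hle _ continuousOn_const (convexOn_const k (convex_Icc a b)) _ _
      (isRSIntegral_const k) (isRSIntegral_const k)
  have hb : F₁ b = F₂ b := by linarith [hconst 1, hconst (-1)]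
  have ha' : a ∈ Set.Icc a b := ⟨le_rfl, hab⟩
  -- on `[a, b]`, `-max x a = -x` is affine, hence convex
  have hneg : ConvexOn ℝ (Set.Icc a b) (fun x => -max x a) :=
    (concaveOn_id (convex_Icc a b)).neg.congr fun x hx => by simp [max_eq_left hx.1]
  have hI : (∫ x in a..b, F₁ x) = ∫ x in a..b, F₂ x := by
    have h₁ := hmax a ha'
    have h₂ := hle _ (hcont a).neg hneg _ _
      (isRSIntegral_max hF₁ ha').neg (isRSIntegral_max hF₂ ha').neg
    rw [ha, hb] at h₁ h₂
    linarith
  refine ⟨hb, hI, fun x hx => ?_⟩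
  have hx' : x ∈ Set.Icc a b := Set.Ioo_subset_Icc_self hx
  have hb' : b ∈ Set.Icc a b := ⟨hab, le_rfl⟩
  have h := hmax x hx'
  have hsplit₁ := intervalIntegral.integral_add_adjacent_intervals
    (hF₁.intervalIntegrable ha' hx') (hF₁.intervalIntegrable hx' hb')
  have hsplit₂ := intervalIntegral.integral_add_adjacent_intervals
    (hF₂.intervalIntegrable ha' hx') (hF₂.intervalIntegrable hx' hb')
  rw [ha, hb] at h
  linarith

theorem ConvexOn.sub_le_sub_of_equal_steps {f : ℝ → ℝ} {s : Set ℝ} (hf : ConvexOn ℝ s f)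
    {x y z h : ℝ} (hh : 0 < h) (hx : x ∈ s) (hz : z ∈ s) (hxy : y - x = h) (hyz : z - y = h) :
    f y - f x ≤ f z - f y := by
  have := hf.slope_mono_adjacent (y := y) hx hz (by linarith) (by linarith)
  rwa [hxy, hyz, div_le_div_iff_of_pos_right hh] at this

theorem neg_le_sum_mul_sub_of_convexOn {f G : ℝ → ℝ} {a b h ε : ℝ} {t : ℕ → ℝ} {n : ℕ}
    (hn : 0 < n) (hh : 0 < h) (ht0 : t 0 = a) (htn : t n = b) (hstep : ∀ i, t (i + 1) - t i = h)
    (hG : BoundedVariationOn G (Set.Icc a b)) (hGa : G a = 0) (hGb : G b = 0)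
    (hH : ∀ x ∈ Set.Icc a b, 0 ≤ ∫ y in a..x, G y) (hHb : ∫ y in a..b, G y = 0)
    (hf : ConvexOn ℝ (Set.Icc a b) f) (hfε : ∀ i < n, |f (t (i + 1)) - f (t i)| ≤ ε) :
    -(3 * ε * variationOnFromTo G (Set.Icc a b) a b) ≤
      ∑ i ∈ range n, f (t i) * (G (t (i + 1)) - G (t i)) := by
  set V := variationOnFromTo G (Set.Icc a b) a b
  set d : ℕ → ℝ := fun i => f (t (i + 1)) - f (t i)
  set g : ℕ → ℝ := fun i => G (t (i + 1)) * (t (i + 1) - t i)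
  have htt : ∀ i < n, t i ≤ t (i + 1) := fun i _ => by linarith [hstep i]
  have hts : ∀ i ≤ n, t i ∈ Set.Icc a b := fun i hi =>
    ht0 ▸ htn ▸ mem_Icc_of_forall_le_succ htt hi
  have ha : a ∈ Set.Icc a b := ht0 ▸ hts 0 hn.le
  have hV : 0 ≤ V := variationOnFromTo.nonneg_of_le _ _ ha.2
  have hε : 0 ≤ ε := (abs_nonneg _).trans (hfε 0 hn)
  have hparts : ∑ i ∈ range n, f (t i) * (G (t (i + 1)) - G (t i)) =
      -∑ i ∈ range n, d i * G (t (i + 1)) := by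
    have := sum_mul_sub_by_parts (fun i => f (t i)) (fun i => G (t i)) n
    rw [ht0, htn, hGa, hGb] at this
    rw [this]
    ring
  have hK : ∀ j ≤ n, |∑ i ∈ range j, g i - ∫ y in a..t j, G y| ≤ h * V := fun j hj => by
    have := hG.abs_sum_mul_sub_integral_le (u := t) (v := t) (τ := fun i => t (i + 1))
      (n := j) (fun i hi => hts i (hi.trans hj)) (fun i hi => htt i (hi.trans_le hj))
      (fun i _ => Set.Ioc_subset_Icc_self) (fun i hi => ⟨htt i (hi.trans_le hj), le_rfl⟩)
      (fun i _ => (hstep i).le)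
    rw [ht0, variationOnFromTo.self, sub_zero] at this
    exact this.trans (mul_le_mul_of_nonneg_left (variationOnFromTo.monotoneOn
      hG.locallyBoundedVariationOn ha (hts j hj) ⟨ha.2, le_rfl⟩ (hts j hj).2) hh.le)
  have hd : ∀ i, i + 1 < n → d i ≤ d (i + 1) := fun i hi =>
    hf.sub_le_sub_of_equal_steps hh (hts i (by omega)) (hts (i + 1 + 1) hi) (hstep i)
      (hstep (i + 1))
  have habel := sum_mul_le_of_monotone_of_neg_le_partialSum hd (L := h * V) fun j hj => by
    linarith [(abs_le.1 (hK j hj)).1, hH (t j) (hts j hj)]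
  have hKn : |∑ i ∈ range n, g i| ≤ h * V := by
    simpa only [htn, hHb, sub_zero] using hK n le_rfl
  have hlast : d (n - 1) * ∑ i ∈ range n, g i ≤ ε * (h * V) :=
    (le_abs_self _).trans <| (abs_mul _ _).trans_le <|
      mul_le_mul (hfε (n - 1) (by omega)) hKn (abs_nonneg _) hε
  have hspread : d (n - 1) - d 0 ≤ 2 * ε := by
    linarith [(abs_le.1 (hfε (n - 1) (by omega))).2, (abs_le.1 (hfε 0 hn)).1]
  have hsum : ∑ i ∈ range n, d i * g i = h * ∑ i ∈ range n, d i * G (t (i + 1)) := by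
    rw [mul_sum]
    exact sum_congr rfl fun i _ => by simp only [g, hstep]; ring
  have : h * ∑ i ∈ range n, d i * G (t (i + 1)) ≤ h * (3 * ε * V) := by
    nlinarith [mul_le_mul_of_nonneg_left hspread (mul_nonneg hh.le hV)]
  linarith [le_of_mul_le_mul_left this hh]

theorem exists_uniform_partition {a b δ : ℝ} (hab : a < b) (hδ : 0 < δ) :
    ∃ (n : ℕ) (h : ℝ) (t : ℕ → ℝ), 0 < n ∧ 0 < h ∧ h < δ ∧ t 0 = a ∧ t n = b ∧
      ∀ i, t (i + 1) - t i = h := by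
  obtain ⟨n, hn⟩ := exists_nat_gt ((b - a) / δ)
  have hn' : (0 : ℝ) < n := (div_pos (sub_pos.2 hab) hδ).trans hn
  refine ⟨n, (b - a) / n, fun i => a + i * ((b - a) / n), Nat.cast_pos.1 hn',
    div_pos (sub_pos.2 hab) hn', ?_, by simp, by field_simp; ring, fun i => by push_cast; ring⟩
  rwa [div_lt_iff₀ hn', mul_comm, ← div_lt_iff₀ hδ]

theorem integral_sub_nonneg_of_integral_le {a b : ℝ} (hab : a ≤ b) {F₁ F₂ : ℝ → ℝ}
    (hF₁ : BoundedVariationOn F₁ (Set.Icc a b)) (hF₂ : BoundedVariationOn F₂ (Set.Icc a b))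
    (hI : (∫ x in a..b, F₁ x) = ∫ x in a..b, F₂ x)
    (hIoo : ∀ x ∈ Set.Ioo a b, (∫ t in a..x, F₁ t) ≤ ∫ t in a..x, F₂ t) :
    (∀ x ∈ Set.Icc a b, 0 ≤ ∫ y in a..x, (F₂ - F₁) y) ∧ ∫ y in a..b, (F₂ - F₁) y = 0 := by
  have hsub : ∀ x ∈ Set.Icc a b,
      ∫ y in a..x, (F₂ - F₁) y = (∫ y in a..x, F₂ y) - ∫ y in a..x, F₁ y := fun x hx =>
    intervalIntegral.integral_sub (hF₂.intervalIntegrable ⟨le_rfl, hab⟩ hx)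
      (hF₁.intervalIntegrable ⟨le_rfl, hab⟩ hx)
  refine ⟨fun x hx => ?_, by rw [hsub b ⟨hab, le_rfl⟩, hI, sub_self]⟩
  rw [hsub x hx, sub_nonneg]
  rcases hx.1.eq_or_lt with rfl | hax
  · rw [intervalIntegral.integral_same, intervalIntegral.integral_same]
  rcases hx.2.eq_or_lt with rfl | hxb
  · exact hI.le
  exact hIoo x ⟨hax, hxb⟩

theorem isRSIntegral_le_of_integral_conditions {a b : ℝ} (hab : a < b) {F₁ F₂ : ℝ → ℝ}
    (hF₁ : BoundedVariationOn F₁ (Set.Icc a b)) (hF₂ : BoundedVariationOn F₂ (Set.Icc a b))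
    (ha : F₁ a = F₂ a) (hb : F₁ b = F₂ b) (hI : (∫ x in a..b, F₁ x) = ∫ x in a..b, F₂ x)
    (hIoo : ∀ x ∈ Set.Ioo a b, (∫ t in a..x, F₁ t) ≤ ∫ t in a..x, F₂ t)
    {f : ℝ → ℝ} (hfc : ContinuousOn f (Set.Icc a b)) (hf : ConvexOn ℝ (Set.Icc a b) f)
    {I₁ I₂ : ℝ} (h₁ : IsRSIntegral f F₁ a b I₁) (h₂ : IsRSIntegral f F₂ a b I₂) :
    I₁ ≤ I₂ := by
  obtain ⟨hH, hHb⟩ := integral_sub_nonneg_of_integral_le hab.le hF₁ hF₂ hI hIoo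
  set V := variationOnFromTo (F₂ - F₁) (Set.Icc a b) a b
  have hV : 0 ≤ V := variationOnFromTo.nonneg_of_le _ _ hab.le
  refine le_of_forall_pos_le_add fun η hη => ?_
  set ε := η / (3 * V + 2)
  have hε : 0 < ε := by positivity
  obtain ⟨δ₁, hδ₁, hS₁⟩ := h₁ ε hε
  obtain ⟨δ₂, hδ₂, hS₂⟩ := h₂ ε hε
  obtain ⟨δ, hδ, hfδ⟩ := Metric.uniformContinuousOn_iff.1
    (isCompact_Icc.uniformContinuousOn_of_continuous hfc) ε hε
  obtain ⟨n, h, t, hn, hh, hhδ, ht0, htn, hstep⟩ :=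
    exists_uniform_partition hab (lt_min hδ (lt_min hδ₁ hδ₂))
  obtain ⟨hhδ, hhδ₁, hhδ₂⟩ : h < δ ∧ h < δ₁ ∧ h < δ₂ := by simpa only [lt_min_iff] using hhδ
  have htt : ∀ i < n, t i < t (i + 1) := fun i _ => by linarith [hstep i]
  have hts : ∀ i ≤ n, t i ∈ Set.Icc a b := fun i hi =>
    ht0 ▸ htn ▸ mem_Icc_of_forall_le_succ (fun i hi => (htt i hi).le) hi
  have hleft : ∀ i < n, t i ∈ Set.Icc (t i) (t (i + 1)) := fun i hi => ⟨le_rfl, (htt i hi).le⟩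
  have e₁ := hS₁ n t t hn ht0 htn htt (fun i _ => hstep i ▸ hhδ₁) hleft
  have e₂ := hS₂ n t t hn ht0 htn htt (fun i _ => hstep i ▸ hhδ₂) hleft
  have hcore := neg_le_sum_mul_sub_of_convexOn hn hh ht0 htn hstep (hF₂.sub hF₁)
    (by simp [ha]) (by simp [hb]) hH hHb hf fun i hi => by
      rw [← Real.dist_eq]
      refine (hfδ _ (hts (i + 1) hi) _ (hts i hi.le) ?_).le
      rwa [Real.dist_eq, hstep i, abs_of_pos hh]
  have hdiff : ∑ i ∈ range n, f (t i) * ((F₂ - F₁) (t (i + 1)) - (F₂ - F₁) (t i)) =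
      ∑ i ∈ range n, f (t i) * (F₂ (t (i + 1)) - F₂ (t i)) -
        ∑ i ∈ range n, f (t i) * (F₁ (t (i + 1)) - F₁ (t i)) := by
    rw [← sum_sub_distrib]
    exact sum_congr rfl fun i _ => by simp only [Pi.sub_apply]; ring
  have hη : ε * (3 * V + 2) = η := div_mul_cancel₀ _ (by positivity)
  linarith [abs_lt.1 e₁, abs_lt.1 e₂]

/-- The Levin–Stečkin theorem. -/
theorem levin_steckin (a b : ℝ) (hab : a < b) (F₁ F₂ : ℝ → ℝ)
    (hF₁ : BoundedVariationOn F₁ (Set.Icc a b))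
    (hF₂ : BoundedVariationOn F₂ (Set.Icc a b))
    (ha : F₁ a = F₂ a) :
    (∀ f : ℝ → ℝ, ContinuousOn f (Set.Icc a b) → ConvexOn ℝ (Set.Icc a b) f →
      ∀ I₁ I₂ : ℝ, IsRSIntegral f F₁ a b I₁ → IsRSIntegral f F₂ a b I₂ → I₁ ≤ I₂) ↔
    (F₁ b = F₂ b ∧
      (∫ x in a..b, F₁ x) = ∫ x in a..b, F₂ x ∧
      ∀ x ∈ Set.Ioo a b, (∫ t in a..x, F₁ t) ≤ ∫ t in a..x, F₂ t) :=
  ⟨integral_conditions_of_forall_convexOn_le hab.le hF₁ hF₂ ha,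
    fun ⟨hb, hI, hIoo⟩ _ hfc hf _ _ h₁ h₂ =>
      isRSIntegral_le_of_integral_conditions hab hF₁ hF₂ ha hb hI hIoo hfc hf h₁ h₂⟩
end
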